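/- arXiv:1610.04829 — 10 statements merged into one kernel-verified Lean document; each statement's English description precedes it below -/
import Mathlib

section
/- Let K and L be compact Hausdorff spaces, both zero-dimensional. Then L is a Boolean image of K if and only if L is a continuous image of K (i.e., there exists a continuous surjection from K onto L). -/
/-!
Rounding each pseudoclopen `(a⁻, a⁺)` to a clopen `c a` with `a⁻ ⊆ c a ⊆ a⁺` turns the
isomorphism into an exact correspondence: a finite Boolean combination of members of `𝒢` is
nonempty iff the same combination of the sets `c a` is. By compactness of `K` and of `L`, the
same then holds for the infinite combinations deciding membership in every `a ∈ 𝒢`. Since `𝒢`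
separates points, each `x : K` determines a unique `f x : L` lying in exactly those `a` with
`x ∈ c a`; this `f` is onto, and continuous because `L` embeds into `𝒢 → Bool`. Conversely, a
continuous surjection `f` makes `a ↦ (f ⁻¹' a, f ⁻¹' a)` such an isomorphism on the clopens of
`L`.
-/

open Set

/-- `φ` is an isomorphism of the family `𝒢` of subsets of `X` with a family of
pseudoclopens of the topological space `K`: `φ` is injective on `𝒢`, each `φ a`
is a pseudoclopen (a pair of a closed set contained in an open set), and for all
finite disjoint `F, H ⊆ 𝒢` (i.e. pairwise distinct `a₁,…,aₙ,b₁,…,bₘ ∈ 𝒢`) the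
two implications between vanishing of `⋂ F \ ⋃ H` and of the corresponding
combinations of the pseudoclopens hold. -/
def IsPseudoclopenIso {X K : Type*} [TopologicalSpace K]
    (𝒢 : Set (Set X)) (φ : Set X → Set K × Set K) : Prop :=
  Set.InjOn φ 𝒢 ∧
  (∀ a ∈ 𝒢, IsClosed (φ a).1 ∧ IsOpen (φ a).2 ∧ (φ a).1 ⊆ (φ a).2) ∧
  ∀ F H : Set (Set X), F.Finite → H.Finite → F ⊆ 𝒢 → H ⊆ 𝒢 → Disjoint F H →
    ((⋂₀ F \ ⋃₀ H = ∅ → (⋂ a ∈ F, (φ a).2) \ (⋃ a ∈ H, (φ a).1) = ∅) ∧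
     ((⋂ a ∈ F, (φ a).1) \ (⋃ a ∈ H, (φ a).2) = ∅ → ⋂₀ F \ ⋃₀ H = ∅))

/-- A family of subsets of `L` separates the points of `L`. -/
def SeparatesPoints' {L : Type*} (𝒢 : Set (Set L)) : Prop :=
  ∀ x y : L, x ≠ y → ∃ a ∈ 𝒢, (x ∈ a ∧ y ∉ a) ∨ (y ∈ a ∧ x ∉ a)

/-- `L` is a Boolean image of `K`: there is a point-separating family of clopen
subsets of `L` which is isomorphic to a family of pseudoclopens of `K`. -/
def IsBooleanImage (L K : Type*) [TopologicalSpace L] [TopologicalSpace K] : Prop :=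
  ∃ (𝒢 : Set (Set L)) (φ : Set L → Set K × Set K),
    (∀ a ∈ 𝒢, IsClopen a) ∧ SeparatesPoints' 𝒢 ∧ IsPseudoclopenIso 𝒢 φ

open Function Topology

theorem mem_biInter_inter_diff_biUnion_diff_iff {ι Z : Type*} (g : ι → Set Z) (u P : Set ι)
    (z : Z) :
    z ∈ (⋂ i ∈ u ∩ P, g i) \ ⋃ i ∈ u \ P, g i ↔ ∀ i ∈ u, z ∈ g i ↔ i ∈ P := by
  simp only [mem_sdiff, mem_iInter₂, mem_iUnion₂, mem_inter_iff, not_exists]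
  grind

theorem exists_forall_mem_iff_of_finset {ι X : Type*} [TopologicalSpace X] [CompactSpace X]
    {s : ι → Set X} (hs : ∀ i, IsClopen (s i)) {P : Set ι}
    (h : ∀ u : Finset ι, ∃ x, ∀ i ∈ u, x ∈ s i ↔ i ∈ P) :
    ∃ x, ∀ i, x ∈ s i ↔ i ∈ P := by
  have hclosed : ∀ i, IsClosed {x | x ∈ s i ↔ i ∈ P} := by
    intro i
    by_cases hi : i ∈ P
    · simpa [hi] using (hs i).isClosed
    · simp only [hi, iff_false]
      exact (hs i).isOpen.isClosed_compl
  obtain ⟨x, -, hx⟩ := isCompact_univ.inter_iInter_nonempty _ hclosed fun u => by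
    obtain ⟨x, hx⟩ := h u
    exact ⟨x, mem_univ x, mem_iInter₂.2 hx⟩
  exact ⟨x, mem_iInter.1 hx⟩

theorem exists_forall_mem_iff_mem {ι X Y : Type*} [TopologicalSpace X] [CompactSpace X]
    {s : ι → Set X} {t : ι → Set Y} (hs : ∀ i, IsClopen (s i))
    (hst : ∀ (u : Finset ι) (P : Set ι),
      (∃ y, ∀ i ∈ u, y ∈ t i ↔ i ∈ P) → ∃ x, ∀ i ∈ u, x ∈ s i ↔ i ∈ P)
    (y : Y) : ∃ x, ∀ i, x ∈ s i ↔ y ∈ t i :=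
  exists_forall_mem_iff_of_finset hs fun u => hst u {i | y ∈ t i} ⟨y, fun _ _ => Iff.rfl⟩

theorem SeparatesPoints'.eq_of_forall_mem_iff {L : Type*} {𝒢 : Set (Set L)}
    (h : SeparatesPoints' 𝒢) {x y : L} (hxy : ∀ a ∈ 𝒢, x ∈ a ↔ y ∈ a) : x = y := by
  by_contra hne
  obtain ⟨a, ha, ⟨hx, hy⟩ | ⟨hy, hx⟩⟩ := h x y hne
  · exact hy ((hxy a ha).1 hx)
  · exact hx ((hxy a ha).2 hy)

theorem continuous_of_isClopen_preimage {K L : Type*} [TopologicalSpace K] [TopologicalSpace L]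
    [CompactSpace L] [T2Space L] {𝒢 : Set (Set L)} (h𝒢 : ∀ a ∈ 𝒢, IsClopen a)
    (hsep : SeparatesPoints' 𝒢) {f : K → L} (hf : ∀ a ∈ 𝒢, IsClopen (f ⁻¹' a)) :
    Continuous f := by
  let e : L → 𝒢 → Bool := fun y a => (a : Set L).boolIndicator y
  have he : IsClosedEmbedding e := by
    refine (continuous_pi fun a : 𝒢 => (continuous_boolIndicator_iff_isClopen _).2 (h𝒢 a a.2))
      |>.isClosedEmbedding fun y y' hyy' => hsep.eq_of_forall_mem_iff fun a ha => ?_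
    simp only [mem_iff_boolIndicator] at hyy' ⊢
    rw [congrFun hyy' ⟨a, ha⟩]
  rw [he.continuous_iff]
  exact continuous_pi fun a : 𝒢 => (continuous_boolIndicator_iff_isClopen _).2 (hf a a.2)

section Pseudoclopen

variable {X K : Type*} [TopologicalSpace K] {𝒢 : Set (Set X)} {φ : Set X → Set K × Set K}
  {c : Set X → Set K}

theorem IsPseudoclopenIso.nonempty_iff (h : IsPseudoclopenIso 𝒢 φ)
    (hc : ∀ a ∈ 𝒢, (φ a).1 ⊆ c a ∧ c a ⊆ (φ a).2) {F H : Set (Set X)} (hF : F.Finite)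
    (hH : H.Finite) (hF𝒢 : F ⊆ 𝒢) (hH𝒢 : H ⊆ 𝒢) (hFH : Disjoint F H) :
    (⋂₀ F \ ⋃₀ H).Nonempty ↔ ((⋂ a ∈ F, c a) \ ⋃ a ∈ H, c a).Nonempty := by
  obtain ⟨hto, hfrom⟩ := h.2.2 F H hF hH hF𝒢 hH𝒢 hFH
  rw [nonempty_iff_ne_empty, nonempty_iff_ne_empty]
  constructor
  · refine mt fun hE => hfrom <| eq_empty_of_subset_empty <| Subset.trans ?_ hE.subset
    exact sdiff_subset_sdiff (iInter₂_mono fun a ha => (hc a (hF𝒢 ha)).1)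
      (iUnion₂_mono fun a ha => (hc a (hH𝒢 ha)).2)
  · refine mt fun hE => eq_empty_of_subset_empty <| Subset.trans ?_ (hto hE).subset
    exact sdiff_subset_sdiff (iInter₂_mono fun a ha => (hc a (hF𝒢 ha)).2)
      (iUnion₂_mono fun a ha => (hc a (hH𝒢 ha)).1)

theorem IsPseudoclopenIso.exists_pattern_iff (h : IsPseudoclopenIso 𝒢 φ)
    (hc : ∀ a ∈ 𝒢, (φ a).1 ⊆ c a ∧ c a ⊆ (φ a).2) (u : Finset 𝒢) (P : Set 𝒢) :
    (∃ y : X, ∀ i ∈ u, y ∈ (i : Set X) ↔ i ∈ P) ↔ ∃ x : K, ∀ i ∈ u, x ∈ c i ↔ i ∈ P := by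
  have hfin : ∀ S ⊆ (u : Set 𝒢), (Subtype.val '' S).Finite := fun S hS =>
    (u.finite_toSet.subset hS).image _
  have := h.nonempty_iff hc (F := Subtype.val '' (↑u ∩ P)) (H := Subtype.val '' (↑u \ P))
    (hfin _ inter_subset_left) (hfin _ sdiff_subset)
    (Subtype.coe_image_subset _ _) (Subtype.coe_image_subset _ _)
    ((disjoint_image_iff Subtype.val_injective).2
      (disjoint_sdiff_right.mono_left inter_subset_right))
  rw [sInter_image, sUnion_image, biInter_image, biUnion_image] at this
  simpa only [Set.Nonempty, mem_biInter_inter_diff_biUnion_diff_iff, Finset.mem_coe] using this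

end Pseudoclopen

theorem IsBooleanImage.exists_continuous_surjective {K L : Type*} [TopologicalSpace K]
    [TopologicalSpace L] [CompactSpace K] [T2Space K] [TotallyDisconnectedSpace K]
    [CompactSpace L] [T2Space L] (h : IsBooleanImage L K) :
    ∃ f : K → L, Continuous f ∧ Surjective f := by
  obtain ⟨𝒢, φ, hclop, hsep, hφ⟩ := h
  choose! c hc using fun a (ha : a ∈ 𝒢) => exists_clopen_of_closed_subset_open
    (hφ.2.1 a ha).1 (hφ.2.1 a ha).2.1 (hφ.2.1 a ha).2.2
  have hpat := hφ.exists_pattern_iff fun a ha => (hc a ha).2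
  choose f hf using exists_forall_mem_iff_mem (s := fun i : 𝒢 => (i : Set L))
    (t := fun i => c i) (fun i => hclop i i.2) fun u P => (hpat u P).2
  have hpre : ∀ a ∈ 𝒢, f ⁻¹' a = c a := fun a ha => ext fun x => hf x ⟨a, ha⟩
  refine ⟨f, continuous_of_isClopen_preimage hclop hsep fun a ha => hpre a ha ▸ (hc a ha).1,
    fun y => ?_⟩
  obtain ⟨x, hx⟩ := exists_forall_mem_iff_mem (s := fun i : 𝒢 => c i)
    (t := fun i => (i : Set L)) (fun i => (hc i i.2).1) (fun u P => (hpat u P).1) y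
  exact ⟨x, hsep.eq_of_forall_mem_iff fun a ha => (hf x ⟨a, ha⟩).trans (hx ⟨a, ha⟩)⟩

theorem isPseudoclopenIso_preimage {K L : Type*} [TopologicalSpace K] [TopologicalSpace L]
    {f : K → L} (hf : Continuous f) (hfs : Surjective f) {𝒢 : Set (Set L)}
    (h𝒢 : ∀ a ∈ 𝒢, IsClopen a) : IsPseudoclopenIso 𝒢 fun a => (f ⁻¹' a, f ⁻¹' a) := by
  refine ⟨fun a _ b _ hab => hfs.preimage_injective (congrArg Prod.fst hab),
    fun a ha => ⟨(h𝒢 a ha).1.preimage hf, (h𝒢 a ha).2.preimage hf, subset_rfl⟩,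
    fun F H _ _ _ _ _ => ?_⟩
  have hpre : (⋂ a ∈ F, f ⁻¹' a) \ ⋃ a ∈ H, f ⁻¹' a = f ⁻¹' (⋂₀ F \ ⋃₀ H) := by
    rw [preimage_sdiff, preimage_sInter, preimage_sUnion]
  rw [hpre, hfs.preimage_injective.eq_iff' preimage_empty]
  exact ⟨id, id⟩

theorem isBooleanImage_of_continuous_surjective {K L : Type*} [TopologicalSpace K]
    [TopologicalSpace L] [TotallySeparatedSpace L] {f : K → L} (hf : Continuous f)
    (hfs : Surjective f) : IsBooleanImage L K := by
  refine ⟨{a | IsClopen a}, _, fun a ha => ha, fun x y hxy => ?_,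
    isPseudoclopenIso_preimage hf hfs fun a ha => ha⟩
  obtain ⟨U, hU, hx, hy⟩ := exists_isClopen_of_totally_separated hxy
  exact ⟨U, hU, Or.inl ⟨hx, hy⟩⟩

/-- For compact Hausdorff zero-dimensional `K` and `L`, `L` is a
Boolean image of `K` iff `L` is a continuous image of `K`. -/
theorem boolean_image_iff_continuous_image (K L : Type*)
    [TopologicalSpace K] [TopologicalSpace L]
    [CompactSpace K] [T2Space K] [TotallyDisconnectedSpace K]
    [CompactSpace L] [T2Space L] [TotallyDisconnectedSpace L] :
    IsBooleanImage L K ↔ ∃ f : K → L, Continuous f ∧ Function.Surjective f :=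
  ⟨IsBooleanImage.exists_continuous_surjective,
    fun ⟨_, hf, hfs⟩ => isBooleanImage_of_continuous_surjective hf hfs⟩
end

section
/- Let K be a separably connected compact Hausdorff space and let L be a compact zero-dimensional Hausdorff space which is a Boolean image of K. Then either L is Corson compact, or L maps continuously onto the Cantor cube 2^{ω₁} (the product of ω₁ copies of the two-point discrete space, where ω₁ is the first uncountable ordinal). -/
/-! The members of `𝒢` whose pseudoclopen straddles a fixed point `d ∈ K` (that is,
`d ∈ a⁺ \ a⁻`) form an independent family, by the first implication of the isomorphism. If one
such family is uncountable, any `ω₁` of its members, being clopen in the compact space `L`, give a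
continuous surjection onto `2^{ω₁}`.

Otherwise, by compactness of `K` and the second implication, every `x ∈ L` is coded by a point
`c x ∈ K` lying in `a⁻` for `x ∈ a` and outside `a⁺` for `x ∉ a`. A member of `𝒢` separating `x`
from `y` then straddles, by connectedness, some point of any connected set containing `c x` and
`c y`, hence a point of a countable dense subset of it. So only countably many members of `𝒢`
separate `x` from a base point `x₀`, and recording which of them do embeds `L` into a Σ-product.
-/

open Set

/-- Any two points lie in a connected separable subspace. -/
def SeparablyConnected (K : Type*) [TopologicalSpace K] : Prop :=
  ∀ x y : K, ∃ S : Set K, x ∈ S ∧ y ∈ S ∧ IsConnected S ∧ TopologicalSpace.IsSeparable S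

/-- `L` is Corson compact: homeomorphic to a compact subset of a Σ-product of real lines. -/
def IsCorsonCompact (L : Type u) [TopologicalSpace L] : Prop :=
  ∃ (Γ : Type u) (S : Set (Γ → ℝ)), IsCompact S ∧
    (∀ x ∈ S, {γ | x γ ≠ 0}.Countable) ∧ Nonempty (L ≃ₜ ↥S)


open Function

theorem IsPreconnected.nonempty_inter_diff_of_subset_closure {X : Type*} [TopologicalSpace X]
    {S D C U : Set X} (hS : IsPreconnected S) (hD : S ⊆ closure D) (hC : IsClosed C)
    (hU : IsOpen U) (hCU : C ⊆ U) (hSC : (S ∩ C).Nonempty) (hSU : (S \ U).Nonempty) :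
    (D ∩ (U \ C)).Nonempty := by
  have hcover : S ⊆ U ∪ Cᶜ := fun s _ => by
    by_cases hs : s ∈ C
    · exact .inl (hCU hs)
    · exact .inr hs
  obtain ⟨w, hwS, hwU, hwC⟩ := hS U Cᶜ hU hC.isOpen_compl hcover
    (hSC.mono fun s hs => ⟨hs.1, hCU hs.2⟩) (hSU.mono fun s hs => ⟨hs.1, fun h => hs.2 (hCU h)⟩)
  obtain ⟨d, hdUC, hdD⟩ := mem_closure_iff.mp (hD hwS) _ (hU.inter hC.isOpen_compl) ⟨hwU, hwC⟩
  exact ⟨d, hdD, hdUC⟩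

theorem Cardinal.nonempty_embedding_ord_aleph_one_toType (α : Type*) [Uncountable α] :
    Nonempty ((aleph.{v} 1).ord.ToType ↪ α) := by
  rw [← lift_mk_le', mk_toType, card_ord, lift_aleph, Ordinal.lift_one, aleph_one_le_iff,
    aleph0_lt_lift]
  exact aleph0_lt_mk

theorem Function.Injective.disjoint_image_sep_not {α ι : Type*} {A : ι → α} (hA : Injective A)
    (s : Set ι) (p : ι → Prop) : Disjoint (A '' {i ∈ s | p i}) (A '' {i ∈ s | ¬p i}) :=
  (disjoint_image_iff hA).mpr (disjoint_left.mpr fun _ hi hi' => hi'.2 hi.2)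

theorem Set.boolIndicator_eq_boolIndicator_iff {X : Type*} (s : Set X) (x y : X) :
    s.boolIndicator x = s.boolIndicator y ↔ (x ∈ s ↔ y ∈ s) := by
  simp [Set.boolIndicator]

def IsIndependentFamily {X : Type*} (𝒜 : Set (Set X)) : Prop :=
  ∀ F H : Set (Set X), F.Finite → H.Finite → F ⊆ 𝒜 → H ⊆ 𝒜 → Disjoint F H →
    (⋂₀ F \ ⋃₀ H).Nonempty

theorem IsIndependentFamily.mono {X : Type*} {𝒜 ℬ : Set (Set X)} (h : IsIndependentFamily 𝒜)
    (hℬ : ℬ ⊆ 𝒜) : IsIndependentFamily ℬ :=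
  fun F H hF hH hFℬ hHℬ hFH => h F H hF hH (hFℬ.trans hℬ) (hHℬ.trans hℬ) hFH

theorem IsIndependentFamily.exists_forall_boolIndicator_eq {X ι : Type*} {A : ι → Set X}
    (hA : Injective A) (h : IsIndependentFamily (range A)) (t : Finset ι) (g : ι → Bool) :
    ∃ x, ∀ i ∈ t, (A i).boolIndicator x = g i := by
  obtain ⟨x, hxF, hxH⟩ := h _ _ ((t.finite_toSet.sep _).image A) ((t.finite_toSet.sep _).image A)
    (image_subset_range _ _) (image_subset_range _ _) (hA.disjoint_image_sep_not _ (g · = true))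
  refine ⟨x, fun i hi => ?_⟩
  by_cases hgi : g i = true
  · rw [hgi]
    exact (A i).mem_iff_boolIndicator x |>.mp (hxF _ ⟨i, ⟨hi, hgi⟩, rfl⟩)
  · rw [Bool.eq_false_iff.mpr hgi]
    exact (A i).notMem_iff_boolIndicator x |>.mp fun hx => hxH ⟨A i, ⟨i, ⟨hi, hgi⟩, rfl⟩, hx⟩

theorem IsIndependentFamily.surjective_boolIndicator {X : Type*} [TopologicalSpace X]
    [CompactSpace X] {ι : Type*} {A : ι → Set X}
    (hA : Injective A) (hcl : ∀ i, IsClopen (A i)) (h : IsIndependentFamily (range A)) :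
    Surjective fun x i => (A i).boolIndicator x := by
  intro g
  have hclosed : ∀ i, IsClosed ((A i).boolIndicator ⁻¹' {g i}) := fun i =>
    (isClosed_discrete _).preimage ((continuous_boolIndicator_iff_isClopen _).mpr (hcl i))
  obtain ⟨x, -, hx⟩ := isCompact_univ.inter_iInter_nonempty _ hclosed fun t => by
    obtain ⟨x, hx⟩ := h.exists_forall_boolIndicator_eq hA t g
    exact ⟨x, mem_univ x, mem_iInter₂.mpr hx⟩
  exact ⟨x, funext (mem_iInter.mp hx)⟩

theorem IsIndependentFamily.exists_continuous_surjective_cantor_cube {X : Type*}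
    [TopologicalSpace X] [CompactSpace X]
    {𝒜 : Set (Set X)} (hcl : ∀ a ∈ 𝒜, IsClopen a) (h : IsIndependentFamily 𝒜)
    (hunc : ¬ 𝒜.Countable) :
    ∃ f : X → ((Cardinal.aleph.{v} 1).ord.ToType → Bool), Continuous f ∧ Surjective f := by
  have : Uncountable 𝒜 := not_countable_iff.mp (mt countable_coe_iff.mp hunc)
  obtain ⟨j⟩ := Cardinal.nonempty_embedding_ord_aleph_one_toType 𝒜
  have hinj : Injective fun γ => (j γ : Set X) := Subtype.val_injective.comp j.injective
  refine ⟨_, continuous_pi fun γ => ?_,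
    (h.mono (range_subset_iff.mpr fun γ => (j γ).2)).surjective_boolIndicator hinj
      fun γ => hcl _ (j γ).2⟩
  exact (continuous_boolIndicator_iff_isClopen _).mpr (hcl _ (j γ).2)

def straddling {X K : Type*} (𝒢 : Set (Set X)) (φ : Set X → Set K × Set K) (d : K) :
    Set (Set X) :=
  {a ∈ 𝒢 | d ∈ (φ a).2 \ (φ a).1}

namespace IsPseudoclopenIso

variable {X K : Type*} [TopologicalSpace K] {𝒢 : Set (Set X)} {φ : Set X → Set K × Set K}

theorem isIndependentFamily_straddling (h : IsPseudoclopenIso 𝒢 φ) (d : K) :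
    IsIndependentFamily (straddling 𝒢 φ d) := by
  intro F H hF hH hF𝒢 hH𝒢 hFH
  refine nonempty_iff_ne_empty.mpr fun hempty => ?_
  have hd : d ∈ (⋂ a ∈ F, (φ a).2) \ ⋃ a ∈ H, (φ a).1 :=
    ⟨mem_iInter₂.mpr fun a ha => (hF𝒢 ha).2.1, by
      simp only [mem_iUnion, not_exists]
      exact fun a ha => (hH𝒢 ha).2.2⟩
  have hF𝒢' := hF𝒢.trans (sep_subset 𝒢 _)
  have hH𝒢' := hH𝒢.trans (sep_subset 𝒢 _)
  rw [(h.2.2 F H hF hH hF𝒢' hH𝒢' hFH).1 hempty] at hd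
  exact hd

theorem exists_point [CompactSpace K] (h : IsPseudoclopenIso 𝒢 φ) (x : X) :
    ∃ c : K, ∀ a ∈ 𝒢, (x ∈ a → c ∈ (φ a).1) ∧ (x ∉ a → c ∉ (φ a).2) := by
  classical
  set Z : 𝒢 → Set K := fun a => if x ∈ (a : Set X) then (φ a).1 else (φ a).2ᶜ
  have hZ : ∀ a, IsClosed (Z a) := fun a => by
    by_cases hx : x ∈ (a : Set X)
    · simpa [Z, hx] using (h.2.1 a a.2).1
    · simpa [Z, hx] using (h.2.1 a a.2).2.1.isClosed_compl
  obtain ⟨c, -, hc⟩ := isCompact_univ.inter_iInter_nonempty Z hZ fun t => by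
    set F : Set (Set X) := Subtype.val '' {a ∈ (t : Set 𝒢) | x ∈ (a : Set X)}
    set H : Set (Set X) := Subtype.val '' {a ∈ (t : Set 𝒢) | x ∉ (a : Set X)}
    have hx : x ∈ ⋂₀ F \ ⋃₀ H := by
      refine ⟨?_, ?_⟩
      · rintro _ ⟨a, ⟨-, hxa⟩, rfl⟩
        exact hxa
      · rintro ⟨_, ⟨a, ⟨-, hxa⟩, rfl⟩, hx⟩
        exact hxa hx
    have hFH := h.2.2 F H ((t.finite_toSet.sep _).image _) ((t.finite_toSet.sep _).image _)
      (by rintro _ ⟨a, -, rfl⟩; exact a.2) (by rintro _ ⟨a, -, rfl⟩; exact a.2)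
      (Subtype.val_injective.disjoint_image_sep_not _ _)
    obtain ⟨k, hkF, hkH⟩ := nonempty_iff_ne_empty.mpr fun he => (hFH.2 he ▸ hx : x ∈ (∅ : Set X))
    refine ⟨k, mem_univ k, mem_iInter₂.mpr fun a ha => ?_⟩
    by_cases hxa : x ∈ (a : Set X)
    · simpa [Z, hxa] using mem_iInter₂.mp hkF a ⟨a, ⟨ha, hxa⟩, rfl⟩
    · simpa [Z, hxa] using fun hk => hkH (mem_iUnion₂.mpr ⟨a, ⟨a, ⟨ha, hxa⟩, rfl⟩, hk⟩)
  refine ⟨c, fun a ha => ⟨fun hxa => ?_, fun hxa => ?_⟩⟩ <;>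
    simpa [Z, hxa] using mem_iInter.mp hc ⟨a, ha⟩

theorem exists_mem_straddling (h : IsPseudoclopenIso 𝒢 φ) {S D : Set K} (hS : IsPreconnected S)
    (hD : S ⊆ closure D) {a : Set X} (ha : a ∈ 𝒢) {p q : K} (hp : p ∈ S) (hq : q ∈ S)
    (hpa : p ∈ (φ a).1) (hqa : q ∉ (φ a).2) : ∃ d ∈ D, a ∈ straddling 𝒢 φ d := by
  obtain ⟨hclosed, hopen, hsub⟩ := h.2.1 a ha
  obtain ⟨d, hdD, hd⟩ := hS.nonempty_inter_diff_of_subset_closure hD hclosed hopen hsub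
    ⟨p, hp, hpa⟩ ⟨q, hq, hqa⟩
  exact ⟨d, hdD, ha, hd⟩

theorem countable_separating [CompactSpace K] (h : IsPseudoclopenIso 𝒢 φ)
    (hK : SeparablyConnected K) (hstr : ∀ d, (straddling 𝒢 φ d).Countable) (x y : X) :
    {a ∈ 𝒢 | ¬(x ∈ a ↔ y ∈ a)}.Countable := by
  choose c hc using h.exists_point
  obtain ⟨S, hxS, hyS, hSconn, D, hD, hSD⟩ := hK (c x) (c y)
  refine (hD.biUnion fun d _ => hstr d).mono fun a ⟨ha, hxy⟩ => ?_
  obtain ⟨d, hdD, hd⟩ : ∃ d ∈ D, a ∈ straddling 𝒢 φ d := by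
    by_cases hxa : x ∈ a
    · have hya : y ∉ a := fun hya => hxy (iff_of_true hxa hya)
      exact h.exists_mem_straddling hSconn.isPreconnected hSD ha hxS hyS
        ((hc x a ha).1 hxa) ((hc y a ha).2 hya)
    · have hya : y ∈ a := by_contra fun hya => hxy (iff_of_false hxa hya)
      exact h.exists_mem_straddling hSconn.isPreconnected hSD ha hyS hxS
        ((hc y a ha).1 hya) ((hc x a ha).2 hxa)
  exact mem_biUnion hdD hd

end IsPseudoclopenIso

theorem isCorsonCompact_of_injective {L Γ : Type u} [TopologicalSpace L] [CompactSpace L]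
    (e : L → Γ → ℝ) (hcont : Continuous e) (hinj : Injective e)
    (hsupp : ∀ x, {γ | e x γ ≠ 0}.Countable) : IsCorsonCompact L :=
  ⟨Γ, range e, isCompact_range hcont, forall_mem_range.mpr hsupp,
    ⟨(hcont.subtype_mk mem_range_self).homeoOfEquivCompactToT2 (f := Equiv.ofInjective e hinj)⟩⟩

theorem isCorsonCompact_of_countable_separating {L : Type u} [TopologicalSpace L] [CompactSpace L]
    {𝒢 : Set (Set L)} (hcl : ∀ a ∈ 𝒢, IsClopen a) (hsep : SeparatesPoints' 𝒢)
    (hcount : ∀ x y : L, {a ∈ 𝒢 | ¬(x ∈ a ↔ y ∈ a)}.Countable) : IsCorsonCompact L := by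
  rcases isEmpty_or_nonempty L with hL | hL
  · exact isCorsonCompact_of_injective (Γ := L) (fun _ _ => 0) continuous_const
      (injective_of_subsingleton _) fun x => isEmptyElim x
  obtain ⟨x₀⟩ := hL
  let e : L → 𝒢 → ℝ := fun x a =>
    if (a : Set L).boolIndicator x = (a : Set L).boolIndicator x₀ then 0 else 1
  refine isCorsonCompact_of_injective e (continuous_pi fun a => ?_) ?_ fun x => ?_
  · exact (continuous_of_discreteTopology (f := fun b : Bool =>
      if b = (a : Set L).boolIndicator x₀ then (0 : ℝ) else 1)).comp
      ((continuous_boolIndicator_iff_isClopen _).mpr (hcl a a.2))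
  · intro x y hxy
    by_contra hne
    obtain ⟨a, ha, hxy'⟩ := hsep x y hne
    have := congrFun hxy ⟨a, ha⟩
    rcases hxy' with ⟨hx, hy⟩ | ⟨hy, hx⟩ <;> by_cases h₀ : x₀ ∈ a <;>
      simp_all [e, boolIndicator_eq_boolIndicator_iff]
  · refine ((hcount x x₀).preimage Subtype.val_injective).mono fun a ha => ?_
    refine ⟨a.2, fun hxa => ha ?_⟩
    simp [e, boolIndicator_eq_boolIndicator_iff, hxa]

theorem corson_or_onto_cantor_cube_general (K L : Type*)
    [TopologicalSpace K] [CompactSpace K]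
    [TopologicalSpace L] [CompactSpace L]
    (hK : SeparablyConnected K) (hL : IsBooleanImage L K) :
    IsCorsonCompact L ∨
      ∃ f : L → ((Cardinal.aleph 1).ord.ToType → Bool),
        Continuous f ∧ Function.Surjective f := by
  obtain ⟨𝒢, φ, hcl, hsep, hφ⟩ := hL
  by_cases hstr : ∃ d, ¬(straddling 𝒢 φ d).Countable
  · obtain ⟨d, hd⟩ := hstr
    exact .inr ((hφ.isIndependentFamily_straddling d).exists_continuous_surjective_cantor_cube
      (fun a ha => hcl a ha.1) hd)
  · exact .inl (isCorsonCompact_of_countable_separating hcl hsep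
      (hφ.countable_separating hK (not_exists_not.mp hstr)))

/-- If `K` is separably connected compact Hausdorff and `L` is a
compact zero-dimensional Hausdorff Boolean image of `K`, then `L` is Corson
compact or `L` maps continuously onto the Cantor cube `2^{ω₁}`. -/
theorem corson_or_onto_cantor_cube (K L : Type*)
    [TopologicalSpace K] [CompactSpace K] [T2Space K]
    [TopologicalSpace L] [CompactSpace L] [T2Space L] [TotallyDisconnectedSpace L]
    (hK : SeparablyConnected K) (hL : IsBooleanImage L K) :
    IsCorsonCompact L ∨
      ∃ f : L → ((Cardinal.aleph 1).ord.ToType → Bool),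
        Continuous f ∧ Function.Surjective f :=
  corson_or_onto_cantor_cube_general K L hK hL
end

section
/- Let I be an index set, and for each i ∈ I let Kᵢ be a compact Hausdorff space and Lᵢ a compact zero-dimensional Hausdorff space such that Lᵢ is a Boolean image of Kᵢ. Then the product L = ∏_{i∈I} Lᵢ is a Boolean image of the product K = ∏_{i∈I} Kᵢ. -/
open Set

/-! A Boolean combination `⋂ F \ ⋃ H` of cylinders `{x | x i ∈ a}` is the box
`∏ i, (⋂ Fᵢ \ ⋃ Hᵢ)` of the coordinatewise combinations, hence empty iff one coordinate
combination is; the same holds for the cylinders over the pseudoclopens `φᵢ a`. So sending the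
cylinder over `a ∈ 𝒢ᵢ` to the cylinders over `φᵢ a` transfers the isomorphism conditions
coordinatewise, and these cylinders separate points because each `𝒢ᵢ` does. If some `Lᵢ` is empty,
so is `Kᵢ`, and both products are empty. -/

open Function

namespace IsPseudoclopenIso

variable {X K : Type*} [TopologicalSpace K] {𝒢 : Set (Set X)} {φ : Set X → Set K × Set K}

theorem nonempty_iff_s4 (h : IsPseudoclopenIso 𝒢 φ) : Nonempty X ↔ Nonempty K := by
  have := h.2.2 ∅ ∅ finite_empty finite_empty (empty_subset _) (empty_subset _) (disjoint_empty _)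
  simp only [sInter_empty, sUnion_empty, biInter_empty, biUnion_empty, sdiff_empty,
    univ_eq_empty_iff] at this
  rw [← not_isEmpty_iff, ← not_isEmpty_iff]
  exact ⟨mt this.2, mt this.1⟩

theorem fst_nonempty (h : IsPseudoclopenIso 𝒢 φ) {a : Set X} (ha : a ∈ 𝒢) (hne : a.Nonempty) :
    (φ a).1.Nonempty := by
  have := (h.2.2 {a} ∅ (finite_singleton a) finite_empty (singleton_subset_iff.2 ha)
    (empty_subset _) (disjoint_empty _)).2
  simp only [biInter_singleton, biUnion_empty, sInter_singleton, sUnion_empty, sdiff_empty] at this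
  rw [nonempty_iff_ne_empty] at hne ⊢
  exact mt this hne

theorem snd_ne_univ (h : IsPseudoclopenIso 𝒢 φ) {a : Set X} (ha : a ∈ 𝒢) (hne : a ≠ univ) :
    (φ a).2 ≠ univ := by
  have := (h.2.2 ∅ {a} finite_empty (finite_singleton a) (empty_subset _)
    (singleton_subset_iff.2 ha) (empty_disjoint _)).2
  simp only [biInter_empty, biUnion_singleton, sInter_empty, sUnion_singleton, sdiff_eq_empty,
    univ_subset_iff] at this
  exact mt this hne

end IsPseudoclopenIso

theorem isBooleanImage_of_isEmpty (L K : Type*) [TopologicalSpace L] [TopologicalSpace K]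
    [IsEmpty L] [IsEmpty K] : IsBooleanImage L K :=
  ⟨∅, fun _ => (∅, ∅), fun _ h => h.elim, fun x => isEmptyElim x, injOn_empty _, fun _ h => h.elim,
    fun _ _ _ _ _ _ _ => ⟨fun _ => eq_empty_of_isEmpty _, fun _ => eq_empty_of_isEmpty _⟩⟩

theorem exists_isPseudoclopenIso_image {α X K : Type*} [TopologicalSpace K] {s : Set α}
    {A : α → Set X} {P : α → Set K × Set K} (hA : InjOn A s) (hP : InjOn P s)
    (hpc : ∀ p ∈ s, IsClosed (P p).1 ∧ IsOpen (P p).2 ∧ (P p).1 ⊆ (P p).2)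
    (hcond : ∀ F H : Set α, F.Finite → H.Finite → F ⊆ s → H ⊆ s → Disjoint F H →
      ((⋂ p ∈ F, A p) \ (⋃ p ∈ H, A p) = ∅ → (⋂ p ∈ F, (P p).2) \ (⋃ p ∈ H, (P p).1) = ∅) ∧
      ((⋂ p ∈ F, (P p).1) \ (⋃ p ∈ H, (P p).2) = ∅ → (⋂ p ∈ F, A p) \ (⋃ p ∈ H, A p) = ∅)) :
    ∃ Φ : Set X → Set K × Set K, IsPseudoclopenIso (A '' s) Φ := by
  classical
  let Φ : Set X → Set K × Set K := fun S => if hS : ∃ p ∈ s, A p = S then P hS.choose else (∅, ∅)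
  have hΦ : ∀ p ∈ s, Φ (A p) = P p := by
    intro p hp
    have hS : ∃ q ∈ s, A q = A p := ⟨p, hp, rfl⟩
    simp only [Φ, dif_pos hS, hA hS.choose_spec.1 hp hS.choose_spec.2]
  have hΦ_biInter : ∀ T ⊆ s, ∀ g : Set K × Set K → Set K,
      (⋂ S ∈ A '' T, g (Φ S)) = ⋂ p ∈ T, g (P p) ∧ (⋃ S ∈ A '' T, g (Φ S)) = ⋃ p ∈ T, g (P p) := by
    intro T hT g
    simp only [biInter_image, biUnion_image]
    exact ⟨iInter₂_congr fun p hp => by rw [hΦ p (hT hp)],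
      iUnion₂_congr fun p hp => by rw [hΦ p (hT hp)]⟩
  refine ⟨Φ, ?_, ?_, ?_⟩
  · rintro _ ⟨p, hp, rfl⟩ _ ⟨q, hq, rfl⟩ hpq
    rw [hΦ p hp, hΦ q hq] at hpq
    rw [hP hp hq hpq]
  · rintro _ ⟨p, hp, rfl⟩
    rw [hΦ p hp]
    exact hpc p hp
  · intro F' H' hF' hH' hF's hH's hdisj
    obtain ⟨F, hFs, rfl⟩ := subset_image_iff.1 hF's
    obtain ⟨H, hHs, rfl⟩ := subset_image_iff.1 hH's
    rw [sInter_image, sUnion_image, (hΦ_biInter F hFs _).1, (hΦ_biInter F hFs _).1,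
      (hΦ_biInter H hHs _).2, (hΦ_biInter H hHs _).2]
    exact hcond F H (hF'.of_finite_image (hA.mono hFs)) (hH'.of_finite_image (hA.mono hHs))
      hFs hHs hdisj.of_image

section Pi

variable {ι : Type*}

def sigmaCylinder {X : ι → Type*} (p : Σ i, Set (X i)) : Set (∀ i, X i) := eval p.1 ⁻¹' p.2

/-- Only nonempty proper members are kept: the cylinder over such an `a ∈ 𝒢 i` determines `i`. -/
def properSigma {X : ι → Type*} (𝒢 : ∀ i, Set (Set (X i))) : Set (Σ i, Set (X i)) :=
  univ.sigma fun i => {a ∈ 𝒢 i | a.Nonempty ∧ a ≠ univ}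

theorem eq_of_eval_preimage_eq {X : ι → Type*} [∀ i, Nonempty (X i)] {i j : ι}
    {A : Set (X i)} {B : Set (X j)} (h : eval i ⁻¹' A = eval j ⁻¹' B) (hA : A.Nonempty)
    (hA' : A ≠ univ) : i = j := by
  classical
  by_contra hij
  refine hA' (eq_univ_of_forall fun c => ?_)
  obtain ⟨y, hy⟩ : (eval j ⁻¹' B).Nonempty := h ▸ hA.preimage (surjective_eval i)
  have : update y i c ∈ eval i ⁻¹' A := h ▸ by simpa [update_of_ne (Ne.symm hij)] using hy
  simpa using this

theorem biInter_diff_biUnion_eval_preimage {X : ι → Type*} {β : ι → Type*}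
    (t u : ∀ i, β i → Set (X i)) (F H : Set (Σ i, β i)) :
    (⋂ p ∈ F, eval p.1 ⁻¹' t p.1 p.2) \ ⋃ p ∈ H, eval p.1 ⁻¹' u p.1 p.2 =
      univ.pi fun i => (⋂ b ∈ Sigma.mk i ⁻¹' F, t i b) \ ⋃ b ∈ Sigma.mk i ⁻¹' H, u i b := by
  ext x
  simp [Sigma.forall, forall_and]

theorem injOn_sigmaCylinder_properSigma {X : ι → Type*} [∀ i, Nonempty (X i)]
    (𝒢 : ∀ i, Set (Set (X i))) : InjOn sigmaCylinder (properSigma 𝒢) := by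
  rintro ⟨i, a⟩ ⟨-, -, ha, ha'⟩ ⟨j, b⟩ - hab
  obtain rfl := eq_of_eval_preimage_eq hab ha ha'
  exact congrArg (Sigma.mk i) (preimage_injective.2 (surjective_eval i) hab)

theorem separatesPoints'_sigmaCylinder_image {X : ι → Type*} {𝒢 : ∀ i, Set (Set (X i))}
    (h : ∀ i, SeparatesPoints' (𝒢 i)) : SeparatesPoints' (sigmaCylinder '' properSigma 𝒢) := by
  intro x y hxy
  obtain ⟨i, hi⟩ := ne_iff.1 hxy
  obtain ⟨a, ha, hsep⟩ := h i _ _ hi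
  have hmem : ⟨i, a⟩ ∈ properSigma 𝒢 := by
    rcases hsep with ⟨hx, hy⟩ | ⟨hy, hx⟩
    · exact ⟨mem_univ i, ha, ⟨_, hx⟩, (ne_univ_iff_exists_notMem _).2 ⟨_, hy⟩⟩
    · exact ⟨mem_univ i, ha, ⟨_, hy⟩, (ne_univ_iff_exists_notMem _).2 ⟨_, hx⟩⟩
  exact ⟨_, mem_image_of_mem _ hmem, hsep⟩

theorem exists_isPseudoclopenIso_sigmaCylinder_image {L K : ι → Type*}
    [∀ i, TopologicalSpace (K i)] [∀ i, Nonempty (L i)] {𝒢 : ∀ i, Set (Set (L i))}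
    {φ : ∀ i, Set (L i) → Set (K i) × Set (K i)} (h : ∀ i, IsPseudoclopenIso (𝒢 i) (φ i)) :
    ∃ Φ : Set (∀ i, L i) → Set (∀ i, K i) × Set (∀ i, K i),
      IsPseudoclopenIso (sigmaCylinder '' properSigma 𝒢) Φ := by
  have : ∀ i, Nonempty (K i) := fun i => (h i).nonempty_iff_s4.1 inferInstance
  refine exists_isPseudoclopenIso_image (injOn_sigmaCylinder_properSigma 𝒢)
    (P := fun p => (eval p.1 ⁻¹' (φ p.1 p.2).1, eval p.1 ⁻¹' (φ p.1 p.2).2)) ?_ ?_ ?_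
  · rintro ⟨i, a⟩ ⟨-, ha𝒢, ha, ha'⟩ ⟨j, b⟩ ⟨-, hb𝒢, -⟩ hab
    have hsub := ((h i).2.1 a ha𝒢).2.2
    have hne : (φ i a).1 ≠ univ := fun hu =>
      (h i).snd_ne_univ ha𝒢 ha' (univ_subset_iff.1 (hu ▸ hsub))
    obtain rfl := eq_of_eval_preimage_eq (congrArg Prod.fst hab) ((h i).fst_nonempty ha𝒢 ha) hne
    have hφ : φ i a = φ i b := Prod.ext
      (preimage_injective.2 (surjective_eval i) (congrArg Prod.fst hab))
      (preimage_injective.2 (surjective_eval i) (congrArg Prod.snd hab))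
    exact congrArg (Sigma.mk i) ((h i).1 ha𝒢 hb𝒢 hφ)
  · rintro ⟨i, a⟩ ⟨-, ha, -⟩
    obtain ⟨hc, ho, hsub⟩ := (h i).2.1 a ha
    exact ⟨hc.preimage (continuous_apply i), ho.preimage (continuous_apply i), preimage_mono hsub⟩
  · intro F H hF hH hF𝒢 hH𝒢 hFH
    have hslice (i : ι) := (h i).2.2 {a | (⟨i, a⟩ : Σ j, Set (L j)) ∈ F}
      {a | (⟨i, a⟩ : Σ j, Set (L j)) ∈ H} (hF.preimage sigma_mk_injective.injOn)
      (hH.preimage sigma_mk_injective.injOn) (fun _ ha => (hF𝒢 ha).2.1)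
      (fun _ ha => (hH𝒢 ha).2.1) (hFH.preimage _)
    simp only [sInter_eq_biInter, sUnion_eq_biUnion] at hslice
    simp only [sigmaCylinder, biInter_diff_biUnion_eval_preimage (fun _ a => a) (fun _ a => a),
      biInter_diff_biUnion_eval_preimage (fun i a => (φ i a).1) (fun i a => (φ i a).2),
      biInter_diff_biUnion_eval_preimage (fun i a => (φ i a).2) (fun i a => (φ i a).1),
      univ_pi_eq_empty_iff]
    exact ⟨fun ⟨i, hi⟩ => ⟨i, (hslice i).1 hi⟩, fun ⟨i, hi⟩ => ⟨i, (hslice i).2 hi⟩⟩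

end Pi

theorem boolean_image_pi_general {I : Type*} (K L : I → Type*)
    [∀ i, TopologicalSpace (K i)] [∀ i, TopologicalSpace (L i)]
    (h : ∀ i, IsBooleanImage (L i) (K i)) :
    IsBooleanImage (∀ i, L i) (∀ i, K i) := by
  choose 𝒢 φ hclopen hsep hiso using h
  by_cases hL : ∀ i, Nonempty (L i)
  · obtain ⟨Φ, hΦ⟩ := exists_isPseudoclopenIso_sigmaCylinder_image hiso
    refine ⟨_, Φ, ?_, separatesPoints'_sigmaCylinder_image hsep, hΦ⟩
    rintro _ ⟨⟨i, a⟩, ⟨-, ha, -⟩, rfl⟩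
    exact (hclopen i a ha).preimage (continuous_apply i)
  · obtain ⟨j, hj⟩ := not_forall.1 hL
    have : IsEmpty (∀ i, L i) := isEmpty_pi.2 ⟨j, not_nonempty_iff.1 hj⟩
    have : IsEmpty (∀ i, K i) :=
      isEmpty_pi.2 ⟨j, not_nonempty_iff.1 (mt (hiso j).nonempty_iff_s4.2 hj)⟩
    exact isBooleanImage_of_isEmpty _ _

/-- Products of Boolean images are Boolean images of products. -/
theorem boolean_image_pi {I : Type*} (K L : I → Type*)
    [∀ i, TopologicalSpace (K i)] [∀ i, TopologicalSpace (L i)]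
    [∀ i, CompactSpace (K i)] [∀ i, T2Space (K i)]
    [∀ i, CompactSpace (L i)] [∀ i, T2Space (L i)] [∀ i, TotallyDisconnectedSpace (L i)]
    (h : ∀ i, IsBooleanImage (L i) (K i)) :
    IsBooleanImage (∀ i, L i) (∀ i, K i) :=
  boolean_image_pi_general K L h
end

section
/- For every set Γ, the Cantor cube 2^Γ = {0,1}^Γ is a Boolean image of the Tikhonov cube [0,1]^Γ. -/
open Set

/-!
The coordinate clopens `{x | x γ = true}` of `2^Γ` form an independent family: every
pattern of memberships is realised by some point. The same holds for the coordinate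
pseudoclopens `({f | f γ = 1}, {f | 1/2 < f γ})` of `[0,1]^Γ`, realised by `0/1`-valued
points. So neither side of either implication in the definition of an isomorphism ever
has an empty Boolean combination, and matching `{x | x γ = true}` with the `γ`-th
pseudoclopen is an isomorphism.
-/

open Function

section Independent

variable {ι X K : Type*}

def RealizesAllPatterns (p : ι → Set K × Set K) : Prop :=
  ∀ S : Set ι, ∃ f, ∀ i, (i ∈ S → f ∈ (p i).1) ∧ (i ∉ S → f ∉ (p i).2)

lemma injective_of_surjective_mem {s : ι → Set X} (hs : Surjective fun x i => x ∈ s i) :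
    Injective s := by
  intro i j hij
  obtain ⟨x, hx⟩ := hs (· = i)
  have hxj : x ∈ s j := hij ▸ (congrFun hx i).mpr rfl
  exact ((congrFun hx j).mp hxj).symm

lemma injective_of_forall_exists_mem_fst_not_mem_snd {p : ι → Set K × Set K}
    (hsub : ∀ i, (p i).1 ⊆ (p i).2)
    (hp : RealizesAllPatterns p) :
    Injective p := by
  intro i j hij
  by_contra hne
  obtain ⟨f, hf⟩ := hp {i}
  have hfi : f ∈ (p j).1 := hij ▸ (hf i).1 rfl
  exact (hf j).2 (Ne.symm hne) (hsub j hfi)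

lemma sInter_diff_sUnion_nonempty {s : ι → Set X} (hs : Surjective fun x i => x ∈ s i)
    {F H : Set (Set X)} (hF : F ⊆ range s) (hH : H ⊆ range s) (hFH : Disjoint F H) :
    (⋂₀ F \ ⋃₀ H).Nonempty := by
  obtain ⟨x, hx⟩ := hs fun i => s i ∈ F
  refine ⟨x, fun a ha => ?_, ?_⟩
  · obtain ⟨i, rfl⟩ := hF ha
    exact (congrFun hx i).mpr ha
  · rintro ⟨b, hb, hxb⟩
    obtain ⟨i, rfl⟩ := hH hb
    exact disjoint_left.mp hFH ((congrFun hx i).mp hxb) hb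

lemma iInter_fst_diff_iUnion_snd_extend_nonempty {s : ι → Set X} (hs : Injective s)
    {p : ι → Set K × Set K}
    (hp : RealizesAllPatterns p)
    (g : Set X → Set K × Set K) {F H : Set (Set X)} (hF : F ⊆ range s) (hH : H ⊆ range s)
    (hFH : Disjoint F H) :
    ((⋂ a ∈ F, (extend s p g a).1) \ ⋃ a ∈ H, (extend s p g a).2).Nonempty := by
  obtain ⟨f, hf⟩ := hp (s ⁻¹' F)
  refine ⟨f, mem_iInter₂.mpr fun a ha => ?_, ?_⟩
  · obtain ⟨i, rfl⟩ := hF ha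
    rw [hs.extend_apply]
    exact (hf i).1 ha
  · simp only [mem_iUnion, not_exists]
    intro b hb
    obtain ⟨i, rfl⟩ := hH hb
    rw [hs.extend_apply]
    exact (hf i).2 fun hi => disjoint_left.mp hFH hi hb

theorem isPseudoclopenIso_extend [TopologicalSpace K] {s : ι → Set X}
    (hs : Surjective fun x i => x ∈ s i) {p : ι → Set K × Set K}
    (hpc : ∀ i, IsClosed (p i).1 ∧ IsOpen (p i).2 ∧ (p i).1 ⊆ (p i).2)
    (hp : RealizesAllPatterns p) :
    IsPseudoclopenIso (range s) (extend s p fun _ => (∅, univ)) := by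
  have hs_inj := injective_of_surjective_mem hs
  have hp_inj := injective_of_forall_exists_mem_fst_not_mem_snd (fun i => (hpc i).2.2) hp
  refine ⟨?_, ?_, fun F H _ _ hF hH hFH => ⟨fun h => ?_, fun h => ?_⟩⟩
  · rintro _ ⟨i, rfl⟩ _ ⟨j, rfl⟩ hij
    rw [hs_inj.extend_apply, hs_inj.extend_apply] at hij
    rw [hp_inj hij]
  · rintro _ ⟨i, rfl⟩
    rw [hs_inj.extend_apply]
    exact hpc i
  · exact absurd h (sInter_diff_sUnion_nonempty hs hF hH hFH).ne_empty
  · exact absurd h (iInter_fst_diff_iUnion_snd_extend_nonempty hs_inj hp _ hF hH hFH).ne_empty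

theorem IsBooleanImage.of_independent [TopologicalSpace X] [TopologicalSpace K]
    {s : ι → Set X} (hclopen : ∀ i, IsClopen (s i)) (hsep : SeparatesPoints' (range s))
    (hs : Surjective fun x i => x ∈ s i) {p : ι → Set K × Set K}
    (hpc : ∀ i, IsClosed (p i).1 ∧ IsOpen (p i).2 ∧ (p i).1 ⊆ (p i).2)
    (hp : RealizesAllPatterns p) :
    IsBooleanImage X K :=
  ⟨range s, _, forall_mem_range.mpr hclopen, hsep, isPseudoclopenIso_extend hs hpc hp⟩

end Independent

/-- The Cantor cube `2^Γ` is a Boolean image of the Tikhonov cube `[0,1]^Γ`. -/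
theorem cantor_cube_boolean_image_of_tikhonov_cube (Γ : Type*) :
    IsBooleanImage (Γ → Bool) (Γ → unitInterval) := by
  classical
  refine IsBooleanImage.of_independent (s := fun γ => {x | x γ = true})
    (p := fun γ => ({f | f γ = 1}, {f | (1 / 2 : ℝ) < f γ})) (fun γ => ?_) ?_ ?_ (fun γ => ?_) ?_
  · exact (isClopen_discrete {true}).preimage (continuous_apply γ)
  · intro x y hxy
    obtain ⟨γ, hγ⟩ := ne_iff.mp hxy
    refine ⟨_, mem_range_self γ, ?_⟩
    cases hx : x γ <;> cases hy : y γ <;> simp_all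
  · exact fun P => ⟨fun γ => decide (P γ), funext fun γ => by simp⟩
  · have hcoord : Continuous fun f : Γ → unitInterval => (f γ : ℝ) :=
      continuous_subtype_val.comp (continuous_apply γ)
    refine ⟨isClosed_eq (continuous_apply γ) continuous_const,
      isOpen_lt continuous_const hcoord, fun f (hf : f γ = 1) => by norm_num [hf]⟩
  · exact fun S => ⟨fun γ => if γ ∈ S then 1 else 0,
      fun γ => ⟨fun h => by simp [h], fun h => by norm_num [h]⟩⟩
end

section
/- Let K be a separably connected compact Hausdorff space, let L be a compact zero-dimensional Hausdorff space, and let 𝒢 be a family of clopen subsets of L which is isomorphic to a family of pseudoclopens of K. Then for every x, y ∈ L there is a countable decomposition 𝒢 = ⋃_{n<ω} 𝒢ₙ such that for every n and every partition 𝒢ₙ = ℱ ∪ ℋ into disjoint pieces with ℱ ⊇ {a ∈ 𝒢ₙ : x,y ∈ a} and ℋ ⊇ {a ∈ 𝒢ₙ : x,y ∉ a}, one has ⋂ℱ \ ⋃ℋ ≠ ∅. In particular, for every n the family 𝒢ₙ(x,y) of those a ∈ 𝒢ₙ that contain exactly one of x, y is independent. -/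
open Set

/-- A family of sets is independent: every finite Boolean configuration is nonempty. -/
def IndepFamily {X : Type*} (𝒢 : Set (Set X)) : Prop :=
  ∀ F H : Set (Set X), F.Finite → H.Finite → F ⊆ 𝒢 → H ⊆ 𝒢 → Disjoint F H →
    (⋂₀ F \ ⋃₀ H).Nonempty

/-!
Compactness of `K` turns each `z ∈ L` into a point of `K` lying in `a⁻` for `a ∋ z` and outside
`a⁺` for `a ∌ z`; let `u, v` be such points for `x, y`, and let `d` be a dense sequence of a
connected separable `S ∋ u, v`. The sets not separating `x` and `y` form `𝒢₀`. If `a` separates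
them, `S` meets both `a⁻` and the complement of `a⁺`, so by connectedness it meets the open gap
`a⁺ \ a⁻`, which then contains some `d m`; put `a` into `𝒢ₘ₊₁`. Every class thus has one point
of `K` (`u`, resp. `d m`) in `a⁺` for its members `a` on the `ℱ` side and outside `b⁻` for its
members on the `ℋ` side; the isomorphism makes every finite configuration nonempty, and
compactness of `L` does the rest.
-/

theorem nonempty_biInter_diff_biUnion_of_finite {X ι : Type*} [TopologicalSpace X]
    [CompactSpace X] {F H : Set ι} {f g : ι → Set X}
    (hf : ∀ i ∈ F, IsClosed (f i)) (hg : ∀ i ∈ H, IsOpen (g i))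
    (h : ∀ F' ⊆ F, ∀ H' ⊆ H, F'.Finite → H'.Finite →
      ((⋂ i ∈ F', f i) \ ⋃ i ∈ H', g i).Nonempty) :
    ((⋂ i ∈ F, f i) \ ⋃ i ∈ H, g i).Nonempty := by
  classical
  obtain ⟨x, -, hx⟩ := isCompact_univ.inter_iInter_nonempty
    (Sum.elim (fun i : F => f i) (fun i : H => (g i)ᶜ))
    (by rintro (i | i); exacts [hf i i.2, (hg i i.2).isClosed_compl])
    (fun u => by
      obtain ⟨x, hxF, hxH⟩ := h _ (Subtype.coe_image_subset F u.toLeft) _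
        (Subtype.coe_image_subset H u.toRight) (u.toLeft.finite_toSet.image _)
        (u.toRight.finite_toSet.image _)
      refine ⟨x, mem_univ x, mem_iInter₂.2 ?_⟩
      rintro (i | i) hi
      · exact mem_iInter₂.1 hxF i ⟨i, by simpa using hi, rfl⟩
      · exact fun hxi => hxH (mem_iUnion₂.2 ⟨i, ⟨i, by simpa using hi, rfl⟩, hxi⟩))
  simp only [iInter_sum, mem_inter_iff, mem_iInter, Sum.elim_inl, Sum.elim_inr,
    mem_compl_iff, Subtype.forall] at hx
  exact ⟨x, mem_iInter₂.2 hx.1, fun hxH => by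
    obtain ⟨i, hi, hxi⟩ := mem_iUnion₂.1 hxH; exact hx.2 i hi hxi⟩

theorem IsPreconnected.inter_diff_nonempty {X : Type*} [TopologicalSpace X] {S A U : Set X}
    (hS : IsPreconnected S) (hA : IsClosed A) (hU : IsOpen U) (hAU : A ⊆ U) {u v : X}
    (huS : u ∈ S) (huA : u ∈ A) (hvS : v ∈ S) (hvU : v ∉ U) : (S ∩ (U \ A)).Nonempty :=
  hS U Aᶜ hU hA.isOpen_compl (fun w _ => (em (w ∈ A)).imp (@hAU w) id)
    ⟨u, huS, hAU huA⟩ ⟨v, hvS, fun hvA => hvU (hAU hvA)⟩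

theorem SeparablyConnected.exists_isPreconnected_subset_closure_range {K : Type*}
    [TopologicalSpace K] (hK : SeparablyConnected K) (u v : K) :
    ∃ (S : Set K) (d : ℕ → K), u ∈ S ∧ v ∈ S ∧ IsPreconnected S ∧ S ⊆ closure (range d) := by
  obtain ⟨S, huS, hvS, hS, c, hc, hSc⟩ := hK u v
  have : Nonempty K := ⟨u⟩
  obtain ⟨d, hcd⟩ := countable_iff_exists_subset_range.1 hc
  exact ⟨S, d, huS, hvS, hS.isPreconnected, hSc.trans (closure_mono hcd)⟩

def PartitionsNonempty {X : Type*} (𝒜 : Set (Set X)) (x y : X) : Prop :=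
  ∀ F H : Set (Set X), F ∪ H = 𝒜 → Disjoint F H →
    {a ∈ 𝒜 | x ∈ a ∧ y ∈ a} ⊆ F → {a ∈ 𝒜 | x ∉ a ∧ y ∉ a} ⊆ H → (⋂₀ F \ ⋃₀ H).Nonempty

theorem PartitionsNonempty.indepFamily {X : Type*} {𝒜 : Set (Set X)} {x y : X}
    (h𝒜 : PartitionsNonempty 𝒜 x y) :
    IndepFamily {a ∈ 𝒜 | (x ∈ a ∧ y ∉ a) ∨ (y ∈ a ∧ x ∉ a)} := by
  intro F H _ _ hF hH hFH
  -- Add the sets containing both points to `F` and put the rest of `𝒜` on the other side.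
  set F₁ := F ∪ {a ∈ 𝒜 | x ∈ a ∧ y ∈ a}
  have hF₁ : F₁ ⊆ 𝒜 := union_subset (fun a ha => (hF ha).1) (fun a ha => ha.1)
  have hHF₁ : H ⊆ 𝒜 \ F₁ := by
    rintro b hb
    refine ⟨(hH hb).1, ?_⟩
    rintro (hbF | ⟨-, hxb, hyb⟩)
    · exact disjoint_left.1 hFH hbF hb
    · rcases (hH hb).2 with h | h
      exacts [h.2 hyb, h.2 hxb]
  refine (h𝒜 F₁ (𝒜 \ F₁) (union_sdiff_cancel hF₁) disjoint_sdiff_right (fun a ha => Or.inr ha)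
    ?_).mono (sdiff_subset_sdiff (sInter_subset_sInter subset_union_left) (sUnion_mono hHF₁))
  rintro a ⟨ha, hxa, hya⟩
  refine ⟨ha, ?_⟩
  rintro (haF | ⟨-, hxa', -⟩)
  · rcases (hF haF).2 with h | h
    exacts [hxa h.1, hya h.1]
  · exact hxa hxa'

section Pseudoclopen

variable {K L : Type*} {𝒢 : Set (Set L)} {φ : Set L → Set K × Set K}

def IsImagePoint (𝒢 : Set (Set L)) (φ : Set L → Set K × Set K) (z : L) (u : K) : Prop :=
  ∀ a ∈ 𝒢, (z ∈ a → u ∈ (φ a).1) ∧ (z ∉ a → u ∉ (φ a).2)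

def gapDecomposition (𝒢 : Set (Set L)) (φ : Set L → Set K × Set K) (x y : L) (d : ℕ → K) :
    ℕ → Set (Set L)
  | 0 => {a ∈ 𝒢 | x ∈ a ↔ y ∈ a}
  | m + 1 => {a ∈ 𝒢 | d m ∈ (φ a).2 \ (φ a).1}

theorem gapDecomposition_subset (x y : L) (d : ℕ → K) :
    ∀ n, gapDecomposition 𝒢 φ x y d n ⊆ 𝒢
  | 0 => sep_subset _ _
  | _ + 1 => sep_subset _ _

variable [TopologicalSpace K]

theorem IsPseudoclopenIso.exists_isImagePoint [CompactSpace K] (hφ : IsPseudoclopenIso 𝒢 φ)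
    (z : L) : ∃ u, IsImagePoint 𝒢 φ z u := by
  obtain ⟨u, hu₁, hu₂⟩ := nonempty_biInter_diff_biUnion_of_finite
    (F := {a ∈ 𝒢 | z ∈ a}) (H := {a ∈ 𝒢 | z ∉ a}) (f := fun a => (φ a).1) (g := fun a => (φ a).2)
    (fun a ha => (hφ.2.1 a ha.1).1) (fun a ha => (hφ.2.1 a ha.1).2.1)
    fun F' hF' H' hH' hF'fin hH'fin => by
      rw [nonempty_iff_ne_empty]
      intro h
      have hz : z ∈ ⋂₀ F' \ ⋃₀ H' :=
        ⟨fun a ha => (hF' ha).2, fun ⟨b, hb, hzb⟩ => (hH' hb).2 hzb⟩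
      rw [(hφ.2.2 F' H' hF'fin hH'fin (hF'.trans (sep_subset _ _)) (hH'.trans (sep_subset _ _))
        (disjoint_left.2 fun a ha hb => (hH' hb).2 (hF' ha).2)).2 h] at hz
      exact hz
  exact ⟨u, fun a ha => ⟨fun hz => mem_iInter₂.1 hu₁ a ⟨ha, hz⟩,
    fun hz hua => hu₂ (mem_iUnion₂.2 ⟨a, ⟨ha, hz⟩, hua⟩)⟩⟩

theorem IsPseudoclopenIso.sInter_diff_sUnion_nonempty [TopologicalSpace L] [CompactSpace L]
    (hφ : IsPseudoclopenIso 𝒢 φ) (h𝒢 : ∀ a ∈ 𝒢, IsClopen a) {F H : Set (Set L)}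
    (hF : F ⊆ 𝒢) (hH : H ⊆ 𝒢) (hFH : Disjoint F H) {p : K}
    (hpF : ∀ a ∈ F, p ∈ (φ a).2) (hpH : ∀ b ∈ H, p ∉ (φ b).1) :
    (⋂₀ F \ ⋃₀ H).Nonempty := by
  rw [sInter_eq_biInter, sUnion_eq_biUnion]
  refine nonempty_biInter_diff_biUnion_of_finite (f := id) (g := id)
    (fun a ha => (h𝒢 a (hF ha)).isClosed) (fun b hb => (h𝒢 b (hH hb)).isOpen)
    fun F' hF' H' hH' hF'fin hH'fin => ?_
  rw [nonempty_iff_ne_empty]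
  intro h
  have hp : p ∈ (⋂ a ∈ F', (φ a).2) \ ⋃ b ∈ H', (φ b).1 :=
    ⟨mem_iInter₂.2 fun a ha => hpF a (hF' ha),
      fun hp => by obtain ⟨b, hb, hpb⟩ := mem_iUnion₂.1 hp; exact hpH b (hH' hb) hpb⟩
  rwa [(hφ.2.2 F' H' hF'fin hH'fin (hF'.trans hF) (hH'.trans hH) (hFH.mono hF' hH')).1
    (by simpa [sInter_eq_biInter, sUnion_eq_biUnion] using h)] at hp

theorem IsPseudoclopenIso.partitionsNonempty [TopologicalSpace L] [CompactSpace L]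
    (hφ : IsPseudoclopenIso 𝒢 φ) (h𝒢 : ∀ a ∈ 𝒢, IsClopen a) {𝒜 : Set (Set L)} (h𝒜 : 𝒜 ⊆ 𝒢)
    {x y : L} {p : K}
    (hp : ∀ a ∈ 𝒜, (x ∈ a ∨ y ∈ a → p ∈ (φ a).2) ∧ (x ∉ a ∨ y ∉ a → p ∉ (φ a).1)) :
    PartitionsNonempty 𝒜 x y := by
  intro F H hFH hdisj hboth hneither
  have hF : F ⊆ 𝒜 := hFH ▸ subset_union_left
  have hH : H ⊆ 𝒜 := hFH ▸ subset_union_right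
  refine hφ.sInter_diff_sUnion_nonempty h𝒢 (hF.trans h𝒜) (hH.trans h𝒜) hdisj
    (fun a ha => (hp a (hF ha)).1 ?_) (fun b hb => (hp b (hH hb)).2 ?_)
  · by_contra h
    exact disjoint_left.1 hdisj ha (hneither ⟨hF ha, not_or.1 h⟩)
  · by_contra h
    exact disjoint_right.1 hdisj hb (hboth ⟨hH hb, by simpa only [not_or, not_not] using h⟩)

theorem IsPseudoclopenIso.iUnion_gapDecomposition (hφ : IsPseudoclopenIso 𝒢 φ) {x y : L}
    {u v : K} (hu : IsImagePoint 𝒢 φ x u) (hv : IsImagePoint 𝒢 φ y v) {S : Set K}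
    (hS : IsPreconnected S) (huS : u ∈ S) (hvS : v ∈ S) {d : ℕ → K}
    (hSd : S ⊆ closure (range d)) :
    ⋃ n, gapDecomposition 𝒢 φ x y d n = 𝒢 := by
  refine (iUnion_subset (gapDecomposition_subset x y d)).antisymm fun a ha => ?_
  by_cases hxy : x ∈ a ↔ y ∈ a
  · exact mem_iUnion.2 ⟨0, ha, hxy⟩
  obtain ⟨hcl, hop, hsub⟩ := hφ.2.1 a ha
  have hgap : (S ∩ ((φ a).2 \ (φ a).1)).Nonempty := by
    by_cases hx : x ∈ a
    · have hy : y ∉ a := fun hy => hxy (iff_of_true hx hy)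
      exact hS.inter_diff_nonempty hcl hop hsub huS ((hu a ha).1 hx) hvS ((hv a ha).2 hy)
    · have hy : y ∈ a := by_contra fun hy => hxy (iff_of_false hx hy)
      exact hS.inter_diff_nonempty hcl hop hsub hvS ((hv a ha).1 hy) huS ((hu a ha).2 hx)
  obtain ⟨_, ⟨m, rfl⟩, hm⟩ := (closure_inter_open_nonempty_iff (hop.sdiff hcl)).1
    (hgap.mono (inter_subset_inter_left _ hSd))
  exact mem_iUnion.2 ⟨m + 1, ha, hm⟩

theorem IsPseudoclopenIso.partitionsNonempty_gapDecomposition [TopologicalSpace L]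
    [CompactSpace L] (hφ : IsPseudoclopenIso 𝒢 φ) (h𝒢 : ∀ a ∈ 𝒢, IsClopen a) {x : L}
    {u : K} (hu : IsImagePoint 𝒢 φ x u) (y : L) (d : ℕ → K) :
    ∀ n, PartitionsNonempty (gapDecomposition 𝒢 φ x y d n) x y
  | 0 => hφ.partitionsNonempty h𝒢 (gapDecomposition_subset x y d 0) fun a ⟨ha, hxy⟩ =>
      ⟨fun h => (hφ.2.1 a ha).2.2 ((hu a ha).1 (h.elim id hxy.2)),
        fun h hua => (hu a ha).2 (h.elim id (mt hxy.1)) ((hφ.2.1 a ha).2.2 hua)⟩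
  | m + 1 => hφ.partitionsNonempty h𝒢 (gapDecomposition_subset x y d (m + 1))
      fun _ ha => ⟨fun _ => ha.2.1, fun _ => ha.2.2⟩

end Pseudoclopen

theorem countable_decomposition_of_sep_connected_general {K L : Type*}
    [TopologicalSpace K] [CompactSpace K]
    [TopologicalSpace L] [CompactSpace L]
    (hK : SeparablyConnected K)
    (𝒢 : Set (Set L)) (h𝒢 : ∀ a ∈ 𝒢, IsClopen a)
    (φ : Set L → Set K × Set K) (hφ : IsPseudoclopenIso 𝒢 φ) :
    ∀ x y : L, ∃ G : ℕ → Set (Set L), (⋃ n, G n) = 𝒢 ∧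
      ∀ n : ℕ,
        (∀ F H : Set (Set L), F ∪ H = G n → Disjoint F H →
          {a ∈ G n | x ∈ a ∧ y ∈ a} ⊆ F → {a ∈ G n | x ∉ a ∧ y ∉ a} ⊆ H →
          (⋂₀ F \ ⋃₀ H).Nonempty) ∧
        IndepFamily {a ∈ G n | (x ∈ a ∧ y ∉ a) ∨ (y ∈ a ∧ x ∉ a)} := by
  intro x y
  obtain ⟨u, hu⟩ := hφ.exists_isImagePoint x
  obtain ⟨v, hv⟩ := hφ.exists_isImagePoint y
  obtain ⟨S, d, huS, hvS, hS, hSd⟩ := hK.exists_isPreconnected_subset_closure_range u v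
  refine ⟨gapDecomposition 𝒢 φ x y d, hφ.iUnion_gapDecomposition hu hv hS huS hvS hSd,
    fun n => ?_⟩
  have hn := hφ.partitionsNonempty_gapDecomposition h𝒢 hu y d n
  exact ⟨hn, hn.indepFamily⟩

/-- decomposition theorem for families of clopens isomorphic to
pseudoclopens of a separably connected compact space. -/
theorem countable_decomposition_of_sep_connected {K L : Type*}
    [TopologicalSpace K] [CompactSpace K] [T2Space K]
    [TopologicalSpace L] [CompactSpace L] [T2Space L] [TotallyDisconnectedSpace L]
    (hK : SeparablyConnected K)
    (𝒢 : Set (Set L)) (h𝒢 : ∀ a ∈ 𝒢, IsClopen a)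
    (φ : Set L → Set K × Set K) (hφ : IsPseudoclopenIso 𝒢 φ) :
    ∀ x y : L, ∃ G : ℕ → Set (Set L), (⋃ n, G n) = 𝒢 ∧
      ∀ n : ℕ,
        (∀ F H : Set (Set L), F ∪ H = G n → Disjoint F H →
          {a ∈ G n | x ∈ a ∧ y ∈ a} ⊆ F → {a ∈ G n | x ∉ a ∧ y ∉ a} ⊆ H →
          (⋂₀ F \ ⋃₀ H).Nonempty) ∧
        IndepFamily {a ∈ G n | (x ∈ a ∧ y ∉ a) ∨ (y ∈ a ∧ x ∉ a)} :=
  countable_decomposition_of_sep_connected_general hK 𝒢 h𝒢 φ hφ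
end

section
/- Let K be a separably connected compact Hausdorff space that does not map continuously onto the Tikhonov cube [0,1]^{ω₁} (ω₁ the first uncountable ordinal). Then every compact zero-dimensional Hausdorff space L that is a Boolean image of K is Corson compact. -/
open Set

/-!
A point `x` of `L` has a trace in `K`: by compactness there is a `k` lying in `φ(a)⁻` for every
`a ∋ x` and outside `φ(a)⁺` for every `a ∌ x`. If uncountably many `a ∈ 𝒢` separated two points
`x, y`, a connected separable set joining their traces would meet every such `φ(a)⁺ \ φ(a)⁻`, so
one point `d` of a countable dense subset would lie in uncountably many of them. Through `φ`,
`d` makes these pseudoclopens independent, and `ω₁ × ℕ` independent pseudoclopens map a closed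
subset of `K` onto `{0,1}^(ω₁ × ℕ)`, hence (Hausdorff–Alexandroff, then Tietze) `K` onto
`[0,1]^ω₁`. So each `x` is separated from a fixed `x₀` by only countably many `a`, and
`x ↦ (1_a(x) - 1_a(x₀))_{a ∈ 𝒢}` embeds `L` into a Σ-product.
-/

universe u v

open Set Function

def booleanCombination {ι α : Type*} (P Q : ι → Set α) (u : Finset ι) (ε : ι → Bool) :
    Set α :=
  ⋂ i ∈ u, if ε i then P i else (Q i)ᶜ

theorem mem_booleanCombination {ι α : Type*} {P Q : ι → Set α} {u : Finset ι} {ε : ι → Bool}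
    {z : α} : z ∈ booleanCombination P Q u ε ↔ ∀ i ∈ u, if ε i then z ∈ P i else z ∉ Q i := by
  simp only [booleanCombination, mem_iInter]
  refine forall₂_congr fun i _ => ?_
  split <;> rfl

theorem biInter_image_diff_biUnion_image_eq_booleanCombination {ι α β : Type*} (e : ι → α)
    (P Q : α → Set β) (u : Finset ι) (ε : ι → Bool) :
    (⋂ a ∈ e '' {i | i ∈ u ∧ ε i}, P a) \ (⋃ a ∈ e '' {i | i ∈ u ∧ ¬ ε i}, Q a) =
      booleanCombination (P ∘ e) (Q ∘ e) u ε := by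
  ext z
  simp only [booleanCombination, mem_sdiff, biInter_image, biUnion_image, mem_iInter, mem_iUnion,
    mem_ofPred_eq, comp_apply, not_exists]
  refine ⟨fun h i hi => ?_, fun h => ⟨fun i hi => ?_, fun i hi hz => ?_⟩⟩
  · cases hε : ε i
    · simpa [hε] using h.2 i ⟨hi, by simp [hε]⟩
    · simpa [hε] using h.1 i ⟨hi, hε⟩
  · simpa [hi.2] using h i hi.1
  · have := h i hi.1
    simp only [hi.2] at this
    exact this hz

theorem IsPreconnected.inter_diff_nonempty_s13 {α : Type*} [TopologicalSpace α] {S P Q : Set α}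
    (hS : IsPreconnected S) (hP : IsClosed P) (hQ : IsOpen Q) (hPQ : P ⊆ Q)
    (hSP : (S ∩ P).Nonempty) (hSQ : (S \ Q).Nonempty) : (S ∩ (Q \ P)).Nonempty :=
  hS Q Pᶜ hQ hP.isOpen_compl (fun z _ => (em (z ∈ P)).imp (fun h => hPQ h) id)
    (hSP.mono (inter_subset_inter_right _ hPQ)) (hSQ.mono fun _ hz => ⟨hz.1, mt (@hPQ _) hz.2⟩)

theorem TopologicalSpace.IsSeparable.exists_not_countable_setOf_mem {α ι : Type*}
    [TopologicalSpace α] {S : Set α} (hS : IsSeparable S) {I : Set ι} (hI : ¬ I.Countable)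
    {U : ι → Set α} (hU : ∀ i ∈ I, IsOpen (U i)) (hSU : ∀ i ∈ I, (S ∩ U i).Nonempty) :
    ∃ z, ¬ {i ∈ I | z ∈ U i}.Countable := by
  obtain ⟨c, hc, hSc⟩ := hS
  by_contra! h
  refine hI ((hc.biUnion fun z _ => h z).mono fun i hi => ?_)
  obtain ⟨p, hpS, hpU⟩ := hSU i hi
  obtain ⟨z, hzU, hzc⟩ := mem_closure_iff.1 (hSc hpS) _ (hU i hi) hpU
  exact mem_biUnion hzc ⟨hi, hzU⟩

open Cardinal in
theorem nonempty_embedding_prod_nat_of_not_countable {κ : Type u} (hκ : #κ ≤ ℵ₁) {α : Type v}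
    {s : Set α} (hs : ¬ s.Countable) : Nonempty (κ × ℕ ↪ s) := by
  rw [← lift_mk_le']
  have hκℕ : #(κ × ℕ) ≤ ℵ₁ := by
    rw [mk_prod, lift_uzero, mk_nat, lift_aleph0]
    exact mul_le_of_le (aleph0_le_aleph 1) hκ (aleph0_le_aleph 1)
  have hs : ℵ₀ < lift.{u} #s :=
    aleph0_lt_lift.2 (lt_of_not_ge (mt le_aleph0_iff_set_countable.1 hs))
  calc lift.{v} #(κ × ℕ) ≤ ℵ₁ := lift_le_aleph_one.2 hκℕ
    _ ≤ lift #s := succ_aleph0 ▸ Order.succ_le_of_lt hs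

theorem exists_continuous_surjective_bool_of_booleanCombination_nonempty {K ι : Type*}
    [TopologicalSpace K] [CompactSpace K] {P Q : ι → Set K} (hP : ∀ i, IsClosed (P i))
    (hQ : ∀ i, IsOpen (Q i)) (hPQ : ∀ i, P i ⊆ Q i)
    (hind : ∀ u ε, (booleanCombination P Q u ε).Nonempty) :
    ∃ C : Set K, IsClosed C ∧ ∃ g : C → ι → Bool, Continuous g ∧ Surjective g := by
  classical
  set C := ⋂ i, P i ∪ (Q i)ᶜ
  have hP_iff_Q : ∀ z : C, ∀ i, z.1 ∈ P i ↔ z.1 ∈ Q i := fun z i =>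
    ⟨(hPQ i ·), fun hQz => ((mem_iInter.1 z.2 i).resolve_right (not_not_intro hQz))⟩
  refine ⟨C, isClosed_iInter fun i => (hP i).union (hQ i).isClosed_compl,
    fun z i => decide (z.1 ∈ P i), continuous_pi fun i => (continuous_bool_rng true).2 ?_,
    fun ε => ?_⟩
  · have hpre : (fun z : C => decide (z.1 ∈ P i)) ⁻¹' {true} = (↑) ⁻¹' P i := by ext; simp
    refine hpre ▸ ⟨(hP i).preimage continuous_subtype_val, ?_⟩
    rw [show ((↑) ⁻¹' P i : Set C) = (↑) ⁻¹' Q i from ext fun z => hP_iff_Q z i]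
    exact (hQ i).preimage continuous_subtype_val
  · let D : ι → Set K := fun i => if ε i then P i else (Q i)ᶜ
    have hD : ∀ i, IsClosed (D i) := fun i => by
      by_cases h : ε i <;> simp only [D, h, if_true, if_false, Bool.false_eq_true]
      exacts [hP i, (hQ i).isClosed_compl]
    obtain ⟨z, -, hz⟩ := isCompact_univ.inter_iInter_nonempty D hD fun u => by
      simpa [booleanCombination] using hind u ε
    have hzC : z ∈ C := mem_iInter.2 fun i => by
      have := mem_iInter.1 hz i
      by_cases h : ε i <;> simp_all [D]
    refine ⟨⟨z, hzC⟩, funext fun i => ?_⟩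
    have := mem_iInter.1 hz i
    cases h : ε i <;> simp_all [D]

theorem exists_continuous_surjective_prod_nat_bool (κ : Type*) :
    ∃ g : (κ × ℕ → Bool) → κ → unitInterval, Continuous g ∧ Surjective g := by
  obtain ⟨c, hc, hcs⟩ := exists_nat_bool_continuous_surjective_of_compact unitInterval
  refine ⟨fun t γ => c fun n => t (γ, n),
    continuous_pi fun γ => hc.comp (continuous_pi fun n => continuous_apply _), fun s => ?_⟩
  choose σ hσ using fun γ => hcs (s γ)
  exact ⟨fun p => σ p.1 p.2, funext hσ⟩

theorem exists_continuous_surjective_of_isClosed {X : Type u} {Y : Type v} [TopologicalSpace X]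
    [NormalSpace X] [TopologicalSpace Y] [TietzeExtension.{u, v} Y] {C : Set X} (hC : IsClosed C)
    {g : C → Y} (hg : Continuous g) (hgs : Surjective g) :
    ∃ f : X → Y, Continuous f ∧ Surjective f := by
  obtain ⟨f, hf⟩ := ContinuousMap.exists_restrict_eq hC ⟨g, hg⟩
  refine ⟨f, f.continuous, fun y => ?_⟩
  obtain ⟨z, rfl⟩ := hgs y
  exact ⟨z, DFunLike.congr_fun hf z⟩

theorem exists_continuous_surjective_of_booleanCombination_nonempty {K κ : Type*}
    [TopologicalSpace K] [CompactSpace K] [T2Space K] {P Q : κ × ℕ → Set K}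
    (hP : ∀ i, IsClosed (P i)) (hQ : ∀ i, IsOpen (Q i)) (hPQ : ∀ i, P i ⊆ Q i)
    (hind : ∀ u ε, (booleanCombination P Q u ε).Nonempty) :
    ∃ f : K → κ → unitInterval, Continuous f ∧ Surjective f := by
  obtain ⟨C, hC, g, hg, hgs⟩ :=
    exists_continuous_surjective_bool_of_booleanCombination_nonempty hP hQ hPQ hind
  obtain ⟨c, hc, hcs⟩ := exists_continuous_surjective_prod_nat_bool κ
  exact exists_continuous_surjective_of_isClosed hC (hc.comp hg) (hcs.comp hgs)

namespace IsPseudoclopenIso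

variable {X K : Type*} [TopologicalSpace K] {𝒢 : Set (Set X)} {φ : Set X → Set K × Set K}
  (hφ : IsPseudoclopenIso 𝒢 φ)
include hφ

section Indexed

variable {ι : Type*} {e : ι → Set X} (he : Injective e) (he𝒢 : ∀ i, e i ∈ 𝒢)
  (u : Finset ι) (ε : ι → Bool)
include he he𝒢

theorem booleanCombination_eq_empty :
    (booleanCombination e e u ε = ∅ →
      booleanCombination (fun i => (φ (e i)).2) (fun i => (φ (e i)).1) u ε = ∅) ∧
    (booleanCombination (fun i => (φ (e i)).1) (fun i => (φ (e i)).2) u ε = ∅ →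
      booleanCombination e e u ε = ∅) := by
  have hfin : ∀ p : ι → Prop, (e '' {i | i ∈ u ∧ p i}).Finite := fun p =>
    (u.finite_toSet.subset fun i hi => hi.1).image e
  have hsub : ∀ p : ι → Prop, e '' {i | i ∈ u ∧ p i} ⊆ 𝒢 := fun p => by
    rintro _ ⟨i, -, rfl⟩
    exact he𝒢 i
  have hdisj : Disjoint (e '' {i | i ∈ u ∧ ε i}) (e '' {i | i ∈ u ∧ ¬ ε i}) :=
    (disjoint_image_iff he).2 (disjoint_left.2 fun i hi hi' => hi'.2 hi.2)
  have h := hφ.2.2 _ _ (hfin _) (hfin _) (hsub _) (hsub _) hdisj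
  rwa [sInter_eq_biInter, sUnion_eq_biUnion,
    biInter_image_diff_biUnion_image_eq_booleanCombination,
    biInter_image_diff_biUnion_image_eq_booleanCombination,
    biInter_image_diff_biUnion_image_eq_booleanCombination] at h

theorem nonempty_of_nonempty_outer
    (h : (booleanCombination (fun i => (φ (e i)).2) (fun i => (φ (e i)).1) u ε).Nonempty) :
    (booleanCombination e e u ε).Nonempty :=
  nonempty_iff_ne_empty.2 <|
    mt (hφ.booleanCombination_eq_empty he he𝒢 u ε).1 (nonempty_iff_ne_empty.1 h)

theorem nonempty_inner_of_nonempty (h : (booleanCombination e e u ε).Nonempty) :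
    (booleanCombination (fun i => (φ (e i)).1) (fun i => (φ (e i)).2) u ε).Nonempty :=
  nonempty_iff_ne_empty.2 <|
    mt (hφ.booleanCombination_eq_empty he he𝒢 u ε).2 (nonempty_iff_ne_empty.1 h)

end Indexed

theorem exists_trace [CompactSpace K] (x : X) :
    ∃ k : K, ∀ a ∈ 𝒢, (x ∈ a → k ∈ (φ a).1) ∧ (x ∉ a → k ∉ (φ a).2) := by
  classical
  let ε : 𝒢 → Bool := fun a => decide (x ∈ a.1)
  let C : 𝒢 → Set K := fun a => if ε a then (φ a).1 else ((φ a).2)ᶜ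
  have hC : ∀ a, IsClosed (C a) := fun a => by
    by_cases h : ε a <;> simp only [C, h, if_true, if_false, Bool.false_eq_true]
    exacts [(hφ.2.1 a a.2).1, (hφ.2.1 a a.2).2.1.isClosed_compl]
  have hfin : ∀ u : Finset 𝒢, (univ ∩ ⋂ a ∈ u, C a).Nonempty := fun u => by
    rw [univ_inter]
    refine hφ.nonempty_inner_of_nonempty Subtype.val_injective (fun a => a.2) u ε ⟨x, ?_⟩
    simp [mem_booleanCombination, ε]
  obtain ⟨k, -, hk⟩ := isCompact_univ.inter_iInter_nonempty C hC hfin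
  refine ⟨k, fun a ha => ?_⟩
  have := mem_iInter.1 hk ⟨a, ha⟩
  by_cases hxa : x ∈ a <;> simp_all [C, ε]

theorem exists_not_countable_mem_diff [CompactSpace K] (hK : SeparablyConnected K) {x y : X}
    (hxy : ¬ {a ∈ 𝒢 | Xor (x ∈ a) (y ∈ a)}.Countable) :
    ∃ d : K, ¬ {a ∈ 𝒢 | d ∈ (φ a).2 \ (φ a).1}.Countable := by
  obtain ⟨kx, hkx⟩ := hφ.exists_trace x
  obtain ⟨ky, hky⟩ := hφ.exists_trace y
  obtain ⟨S, hxS, hyS, hS, hSsep⟩ := hK kx ky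
  have hcross : ∀ a ∈ {a ∈ 𝒢 | Xor (x ∈ a) (y ∈ a)}, (S ∩ ((φ a).2 \ (φ a).1)).Nonempty := by
    rintro a ⟨ha, ⟨hxa, hya⟩ | ⟨hya, hxa⟩⟩ <;> obtain ⟨hP, hQ, hPQ⟩ := hφ.2.1 a ha
    · exact hS.isPreconnected.inter_diff_nonempty_s13 hP hQ hPQ ⟨kx, hxS, (hkx a ha).1 hxa⟩
        ⟨ky, hyS, (hky a ha).2 hya⟩
    · exact hS.isPreconnected.inter_diff_nonempty_s13 hP hQ hPQ ⟨ky, hyS, (hky a ha).1 hya⟩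
        ⟨kx, hxS, (hkx a ha).2 hxa⟩
  obtain ⟨d, hd⟩ := hSsep.exists_not_countable_setOf_mem hxy
    (fun a ha => (hφ.2.1 a ha.1).2.1.sdiff (hφ.2.1 a ha.1).1) hcross
  refine ⟨d, fun h => hd (h.mono ?_)⟩
  exact fun a ha => ⟨ha.1.1, ha.2⟩

theorem exists_continuous_surjective_of_mem_diff [CompactSpace K] [T2Space K] {κ : Type*}
    {e : κ × ℕ → Set X} (he : Injective e) (he𝒢 : ∀ p, e p ∈ 𝒢) {d : K}
    (hd : ∀ p, d ∈ (φ (e p)).2 \ (φ (e p)).1) :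
    ∃ f : K → κ → unitInterval, Continuous f ∧ Surjective f := by
  refine exists_continuous_surjective_of_booleanCombination_nonempty
    (fun p => (hφ.2.1 _ (he𝒢 p)).1) (fun p => (hφ.2.1 _ (he𝒢 p)).2.1)
    (fun p => (hφ.2.1 _ (he𝒢 p)).2.2) fun u ε => hφ.nonempty_inner_of_nonempty he he𝒢 u ε <|
      hφ.nonempty_of_nonempty_outer he he𝒢 u ε ⟨d, mem_booleanCombination.2 fun p _ => ?_⟩
  cases ε p
  exacts [(hd p).2, (hd p).1]

end IsPseudoclopenIso

theorem isCorsonCompact_of_continuous_injective {L Γ : Type u} [TopologicalSpace L]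
    [CompactSpace L] {f : L → Γ → ℝ} (hf : Continuous f) (hinj : Injective f)
    (hsupp : ∀ x, {γ | f x γ ≠ 0}.Countable) : IsCorsonCompact L :=
  ⟨Γ, range f, isCompact_range hf, forall_mem_range.2 hsupp,
    ⟨(hf.isClosedEmbedding hinj).isEmbedding.toHomeomorph⟩⟩

theorem isCorsonCompact_of_separatesPoints {L : Type u} [TopologicalSpace L] [CompactSpace L]
    {𝒢 : Set (Set L)} (hclopen : ∀ a ∈ 𝒢, IsClopen a) (hsep : SeparatesPoints' 𝒢)
    (hcount : ∀ x y : L, {a ∈ 𝒢 | Xor (x ∈ a) (y ∈ a)}.Countable) : IsCorsonCompact L := by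
  rcases isEmpty_or_nonempty L with hL | ⟨⟨x₀⟩⟩
  · exact isCorsonCompact_of_continuous_injective (Γ := L) (f := fun _ _ => 0) continuous_const
      (injective_of_subsingleton _) isEmptyElim
  let χ : 𝒢 → L → ℝ := fun a => (a : Set L).indicator 1
  refine isCorsonCompact_of_continuous_injective (f := fun x a => χ a x - χ a x₀)
    (continuous_pi fun a => ((hclopen a a.2).continuous_indicator continuous_const).sub
      continuous_const) (fun x y hxy => ?_) fun x => ?_
  · by_contra hne
    obtain ⟨a, ha, hxa⟩ := hsep x y hne
    have := sub_left_inj.1 (congr_fun hxy ⟨a, ha⟩)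
    rcases hxa with ⟨hx, hy⟩ | ⟨hy, hx⟩ <;> simp [χ, hx, hy] at this
  · refine ((hcount x x₀).preimage Subtype.val_injective).mono fun a ha => ?_
    by_cases hx : x ∈ a.1 <;> by_cases h0 : x₀ ∈ a.1 <;> simp_all [χ, Xor]

theorem corson_of_boolean_image_of_sep_connected_general {K : Type*}
    [TopologicalSpace K] [CompactSpace K] [T2Space K]
    (hK : SeparablyConnected K)
    (hnot : ¬ ∃ f : K → ((Cardinal.aleph 1).ord.ToType → unitInterval),
      Continuous f ∧ Function.Surjective f)
    (L : Type*) [TopologicalSpace L] [CompactSpace L]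
    (hL : IsBooleanImage L K) : IsCorsonCompact L := by
  obtain ⟨𝒢, φ, hclopen, hsep, hφ⟩ := hL
  refine isCorsonCompact_of_separatesPoints hclopen hsep fun x y => by_contra fun hxy => hnot ?_
  obtain ⟨d, hd⟩ := hφ.exists_not_countable_mem_diff hK hxy
  obtain ⟨η⟩ := nonempty_embedding_prod_nat_of_not_countable
    (κ := (Cardinal.aleph 1).ord.ToType) (by simp) hd
  exact hφ.exists_continuous_surjective_of_mem_diff (Subtype.val_injective.comp η.injective)
    (fun p => (η p).2.1) fun p => (η p).2.2

/-- If `K` is separably connected compact Hausdorff and does not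
map continuously onto `[0,1]^{ω₁}`, then every Boolean image of `K` is Corson
compact. -/
theorem corson_of_boolean_image_of_sep_connected {K : Type*}
    [TopologicalSpace K] [CompactSpace K] [T2Space K]
    (hK : SeparablyConnected K)
    (hnot : ¬ ∃ f : K → ((Cardinal.aleph 1).ord.ToType → unitInterval),
      Continuous f ∧ Function.Surjective f)
    (L : Type*) [TopologicalSpace L] [CompactSpace L] [T2Space L]
    [TotallyDisconnectedSpace L]
    (hL : IsBooleanImage L K) : IsCorsonCompact L :=
  corson_of_boolean_image_of_sep_connected_general hK hnot L hL
end

section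
/- Let K be a connected, separable compact Hausdorff space that does not map continuously onto the Tikhonov cube [0,1]^{ω₁} (ω₁ the first uncountable ordinal). Then every compact zero-dimensional Hausdorff space L that is a Boolean image of K is metrizable. -/
open Set

open Function TopologicalSpace

/-!
By connectedness, every member `a ≠ ∅, univ` of `𝒢` has a nonempty open boundary
`φ(a)⁺ \ φ(a)⁻`, which meets a fixed countable dense set. So if `𝒢` were uncountable, uncountably
many boundaries would share a point `d`. The members whose boundary contains `d` form an
independent family: `⋂ φ(aᵢ)⁻ \ ⋃ φ(bⱼ)⁺` can never be empty, since otherwise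
`⋂ φ(aᵢ)⁺ \ ⋃ φ(bⱼ)⁻`, which contains `d`, would be empty as well. Urysohn functions of
`ω₁ × ℕ` many independent pseudoclopens, glued along `ℕ` into binary sums, map `K` onto
`[0,1]^{ω₁}`. Hence `𝒢` is countable, and `L` embeds into the metrizable cube `2^𝒢`.
-/

-- Extends `Real.ofDigits` (base 2) continuously from `{0,1}^ℕ` to `[0,1]^ℕ`.
noncomputable def binarySum (x : ℕ → unitInterval) : ℝ :=
  ∑' n, (x n : ℝ) * ((2 : ℝ) ^ (n + 1))⁻¹

theorem continuous_binarySum : Continuous binarySum := by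
  refine continuous_tsum (u := fun n => ((2 : ℝ) ^ (n + 1))⁻¹) (fun n => by fun_prop) ?_
    fun n x => ?_
  · simpa [pow_succ, mul_comm] using summable_geometric_two.mul_left (1 / 2 : ℝ)
  · rw [norm_mul, norm_inv, norm_pow, Real.norm_two]
    exact mul_le_of_le_one_left (by positivity)
      (by simpa [abs_of_nonneg (x n).2.1] using (x n).2.2)

theorem binarySum_eq_ofDigits {x : ℕ → unitInterval} {d : ℕ → Fin 2}
    (h : ∀ n, (x n : ℝ) = d n) : binarySum x = Real.ofDigits d := by
  simp [binarySum, Real.ofDigits, Real.ofDigitsTerm, h]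

theorem exists_continuous_surjective_of_forall_digits {X ι : Type*} [TopologicalSpace X]
    {f : X → ι × ℕ → unitInterval} (hf : Continuous f)
    (hd : ∀ d : ι × ℕ → Fin 2, ∃ x, ∀ i, (f x i : ℝ) = d i) :
    ∃ g : X → ι → unitInterval, Continuous g ∧ Surjective g := by
  -- `projIcc` does not change the values of `binarySum`; it only fixes the codomain.
  refine ⟨fun x t => projIcc 0 1 zero_le_one (binarySum fun n => f x (t, n)), ?_, fun y => ?_⟩
  · exact continuous_pi fun t => continuous_projIcc.comp <|
      continuous_binarySum.comp <| continuous_pi fun n => (continuous_apply (t, n)).comp hf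
  · choose d hdy using fun t =>
      (Real.ofDigits_SurjOn one_lt_two (y t).2).imp fun _ => And.right
    obtain ⟨x, hx⟩ := hd fun i => d i.1 i.2
    exact ⟨x, funext fun t => by
      dsimp only
      rw [binarySum_eq_ofDigits fun n => hx (t, n), hdy t, projIcc_val]⟩

section Independent

variable {K ι : Type*}

def IndependentPseudoclopens (p : ι → Set K × Set K) : Prop :=
  ∀ F H : Finset ι, Disjoint F H → ∃ x, (∀ i ∈ F, x ∈ (p i).1) ∧ ∀ i ∈ H, x ∉ (p i).2

variable {p : ι → Set K × Set K}

theorem IndependentPseudoclopens.comp (h : IndependentPseudoclopens p) {κ : Type*} {j : κ → ι}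
    (hj : Injective j) : IndependentPseudoclopens (p ∘ j) := by
  intro F H hFH
  obtain ⟨x, hF, hH⟩ := h (F.map ⟨j, hj⟩) (H.map ⟨j, hj⟩) ((Finset.disjoint_map _).2 hFH)
  exact ⟨x, fun i hi => hF _ (Finset.mem_map_of_mem _ hi),
    fun i hi => hH _ (Finset.mem_map_of_mem _ hi)⟩

variable [TopologicalSpace K]

def IsPseudoclopen (p : Set K × Set K) : Prop :=
  IsClosed p.1 ∧ IsOpen p.2 ∧ p.1 ⊆ p.2

theorem IndependentPseudoclopens.exists_forall_mem_fst [CompactSpace K]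
    (h : IndependentPseudoclopens p) (hp : ∀ i, IsPseudoclopen (p i)) (S : Set ι) :
    ∃ x, (∀ i ∈ S, x ∈ (p i).1) ∧ ∀ i ∉ S, x ∉ (p i).2 := by
  classical
  let T : ι → Set K := fun i => if i ∈ S then (p i).1 else (p i).2ᶜ
  have hT : ∀ i, IsClosed (T i) := fun i => by
    by_cases hi : i ∈ S
    · simpa [T, hi] using (hp i).1
    · simpa [T, hi] using (hp i).2.1.isClosed_compl
  obtain ⟨x, -, hx⟩ := isCompact_univ.inter_iInter_nonempty T hT fun u => by
    obtain ⟨x, hF, hH⟩ :=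
      h (u.filter (· ∈ S)) (u.filter (· ∉ S)) (Finset.disjoint_filter_filter_not _ _ _)
    refine ⟨x, mem_univ x, mem_iInter₂.2 fun i hi => ?_⟩
    by_cases hiS : i ∈ S
    · simpa [T, hiS] using hF i (Finset.mem_filter.2 ⟨hi, hiS⟩)
    · simpa [T, hiS] using hH i (Finset.mem_filter.2 ⟨hi, hiS⟩)
  exact ⟨x, fun i hi => by simpa [T, hi] using mem_iInter.1 hx i,
    fun i hi => by simpa [T, hi] using mem_iInter.1 hx i⟩

theorem IndependentPseudoclopens.exists_continuous_forall_digits [CompactSpace K] [NormalSpace K]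
    (h : IndependentPseudoclopens p) (hp : ∀ i, IsPseudoclopen (p i)) :
    ∃ f : K → ι → unitInterval, Continuous f ∧
      ∀ d : ι → Fin 2, ∃ x, ∀ i, (f x i : ℝ) = d i := by
  choose g hg0 hg1 hg01 using fun i => exists_continuous_zero_one_of_isClosed
    (hp i).2.1.isClosed_compl (hp i).1 (disjoint_compl_left.mono_right (hp i).2.2)
  refine ⟨fun x i => ⟨g i x, hg01 i x⟩, continuous_pi fun i => (g i).continuous.subtype_mk _,
    fun d => ?_⟩
  obtain ⟨x, hS, hSc⟩ := h.exists_forall_mem_fst hp {i | d i = 1}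
  refine ⟨x, fun i => ?_⟩
  obtain hi | hi : d i = 0 ∨ d i = 1 := by omega
  · simpa [hi] using hg0 i (hSc i (by simp [hi]))
  · simpa [hi] using hg1 i (hS i hi)

theorem IndependentPseudoclopens.exists_continuous_surjective [CompactSpace K] [NormalSpace K]
    {p : ι × ℕ → Set K × Set K} (h : IndependentPseudoclopens p)
    (hp : ∀ i, IsPseudoclopen (p i)) :
    ∃ f : K → ι → unitInterval, Continuous f ∧ Surjective f := by
  obtain ⟨f, hf, hd⟩ := h.exists_continuous_forall_digits hp
  exact exists_continuous_surjective_of_forall_digits hf hd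

end Independent

theorem nonempty_embedding_aleph_one_prod_nat {α : Type*} [Uncountable α] :
    Nonempty ((Cardinal.aleph 1).ord.ToType × ℕ ↪ α) := by
  rw [← Cardinal.lift_mk_le']
  simp [Cardinal.mk_toType]

theorem metrizableSpace_of_countable_clopens {L : Type*} [TopologicalSpace L] [CompactSpace L]
    {𝒢 : Set (Set L)} (hc : 𝒢.Countable) (hclopen : ∀ a ∈ 𝒢, IsClopen a)
    (hsep : SeparatesPoints' 𝒢) : MetrizableSpace L := by
  have := hc.to_subtype
  let e : L → 𝒢 → Bool := fun x a => (a : Set L).boolIndicator x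
  have he : Continuous e := continuous_pi fun a =>
    (continuous_boolIndicator_iff_isClopen _).2 (hclopen a a.2)
  have he' : Injective e := by
    intro x y hxy
    by_contra hne
    obtain ⟨a, ha, hdiff⟩ := hsep x y hne
    have : x ∈ a ↔ y ∈ a := by simpa [e, Set.boolIndicator] using congrFun hxy ⟨a, ha⟩
    tauto
  exact (he.isClosedEmbedding he').isEmbedding.metrizableSpace

section PseudoclopenIso

variable {X K : Type*} [TopologicalSpace K] {𝒢 : Set (Set X)} {φ : Set X → Set K × Set K}

def boundaryFamily (𝒢 : Set (Set X)) (φ : Set X → Set K × Set K) (d : K) : Set (Set X) :=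
  {a ∈ 𝒢 | d ∈ (φ a).2 \ (φ a).1}

theorem IsPseudoclopenIso.isPseudoclopen (h : IsPseudoclopenIso 𝒢 φ) {a : Set X} (ha : a ∈ 𝒢) :
    IsPseudoclopen (φ a) :=
  h.2.1 a ha

theorem IsPseudoclopenIso.eq_empty_of_fst_eq_empty (h : IsPseudoclopenIso 𝒢 φ) {a : Set X}
    (ha : a ∈ 𝒢) (h0 : (φ a).1 = ∅) : a = ∅ := by
  simpa [h0] using (h.2.2 {a} ∅ (finite_singleton a) finite_empty (singleton_subset_iff.2 ha)
    (empty_subset _) (disjoint_empty _)).2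

theorem IsPseudoclopenIso.eq_univ_of_snd_eq_univ (h : IsPseudoclopenIso 𝒢 φ) {a : Set X}
    (ha : a ∈ 𝒢) (h1 : (φ a).2 = univ) : a = univ := by
  have := (h.2.2 ∅ {a} finite_empty (finite_singleton a) (empty_subset _)
    (singleton_subset_iff.2 ha) (empty_disjoint _)).2 (by simp [h1])
  simpa [sdiff_eq_empty] using this

theorem IsPseudoclopenIso.nonempty_snd_diff_fst [ConnectedSpace K] (h : IsPseudoclopenIso 𝒢 φ)
    {a : Set X} (ha : a ∈ 𝒢) (h0 : a ≠ ∅) (h1 : a ≠ univ) : ((φ a).2 \ (φ a).1).Nonempty := by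
  obtain ⟨hC, hU, hCU⟩ := h.isPseudoclopen ha
  rw [nonempty_iff_ne_empty, Ne, sdiff_eq_empty]
  intro hUC
  have heq : (φ a).1 = (φ a).2 := hCU.antisymm hUC
  rcases isClopen_iff.1 ⟨hC, heq ▸ hU⟩ with h' | h'
  · exact h0 (h.eq_empty_of_fst_eq_empty ha h')
  · exact h1 (h.eq_univ_of_snd_eq_univ ha (heq ▸ h'))

theorem IsPseudoclopenIso.independent_boundaryFamily (h : IsPseudoclopenIso 𝒢 φ) (d : K) :
    IndependentPseudoclopens fun a : boundaryFamily 𝒢 φ d => φ a := by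
  intro F H hFH
  set F' : Set (Set X) := Subtype.val '' (F : Set (boundaryFamily 𝒢 φ d))
  set H' : Set (Set X) := Subtype.val '' (H : Set (boundaryFamily 𝒢 φ d))
  have hsub : ∀ s : Finset (boundaryFamily 𝒢 φ d),
      Subtype.val '' (s : Set (boundaryFamily 𝒢 φ d)) ⊆ 𝒢 :=
    fun _ => image_subset_iff.2 fun a _ => a.2.1
  have hdisj : Disjoint F' H' :=
    (disjoint_image_iff Subtype.val_injective).2 (Finset.disjoint_coe.2 hFH)
  obtain ⟨hpos, hneg⟩ := h.2.2 F' H' (F.finite_toSet.image _) (H.finite_toSet.image _)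
    (hsub F) (hsub H) hdisj
  by_contra! hno
  have hd : d ∈ (⋂ a ∈ F', (φ a).2) \ ⋃ a ∈ H', (φ a).1 := by
    simp only [F', H', mem_sdiff, biInter_image, biUnion_image, mem_iInter₂, mem_iUnion₂]
    exact ⟨fun a _ => a.2.2.1, fun ⟨a, _, ha⟩ => a.2.2.2 ha⟩
  refine (hpos (hneg ?_)).subset hd
  refine eq_empty_of_forall_notMem fun x ⟨hxF, hxH⟩ => ?_
  simp only [F', H', biInter_image, biUnion_image, mem_iInter₂, mem_iUnion₂] at hxF hxH
  obtain ⟨a, ha, hxa⟩ := hno x hxF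
  exact hxH ⟨a, ha, hxa⟩

theorem IsPseudoclopenIso.exists_not_countable_boundaryFamily [ConnectedSpace K]
    [SeparableSpace K] (h : IsPseudoclopenIso 𝒢 φ) (hG : ¬ 𝒢.Countable) :
    ∃ d, ¬ (boundaryFamily 𝒢 φ d).Countable := by
  obtain ⟨D, hDc, hDd⟩ := exists_countable_dense K
  by_contra! hall
  refine hG <| ((hDc.biUnion fun d _ => hall d).union
    ((countable_singleton univ).insert ∅)).mono fun a ha => ?_
  by_cases h0 : a = ∅
  · simp [h0]
  by_cases h1 : a = univ
  · simp [h1]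
  obtain ⟨hC, hU, -⟩ := h.isPseudoclopen ha
  obtain ⟨d, hdU, hdD⟩ :=
    hDd.inter_open_nonempty _ (hU.sdiff hC) (h.nonempty_snd_diff_fst ha h0 h1)
  exact Or.inl (mem_biUnion hdD ⟨ha, hdU⟩)

theorem IsPseudoclopenIso.countable [CompactSpace K] [NormalSpace K] [ConnectedSpace K]
    [SeparableSpace K] (h : IsPseudoclopenIso 𝒢 φ)
    (hnot : ¬ ∃ f : K → ((Cardinal.aleph 1).ord.ToType → unitInterval),
      Continuous f ∧ Surjective f) :
    𝒢.Countable := by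
  by_contra hG
  obtain ⟨d, hd⟩ := h.exists_not_countable_boundaryFamily hG
  have : Uncountable (boundaryFamily 𝒢 φ d) := by
    rwa [← not_countable_iff, countable_coe_iff]
  obtain ⟨j⟩ := nonempty_embedding_aleph_one_prod_nat (α := boundaryFamily 𝒢 φ d)
  exact hnot <| ((h.independent_boundaryFamily d).comp j.injective).exists_continuous_surjective
    fun i => h.isPseudoclopen (j i).2.1

end PseudoclopenIso

theorem metrizable_of_boolean_image_of_separable_connected_general {K : Type*}
    [TopologicalSpace K] [CompactSpace K] [T2Space K]
    [ConnectedSpace K] [TopologicalSpace.SeparableSpace K]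
    (hnot : ¬ ∃ f : K → ((Cardinal.aleph 1).ord.ToType → unitInterval),
      Continuous f ∧ Function.Surjective f)
    (L : Type*) [TopologicalSpace L] [CompactSpace L]
    (hL : IsBooleanImage L K) : TopologicalSpace.MetrizableSpace L := by
  obtain ⟨𝒢, φ, hclopen, hsep, hφ⟩ := hL
  exact metrizableSpace_of_countable_clopens (hφ.countable hnot) hclopen hsep

/-- If `K` is connected, separable, compact Hausdorff and does not
map continuously onto `[0,1]^{ω₁}`, then every Boolean image of `K` is metrizable. -/
theorem metrizable_of_boolean_image_of_separable_connected {K : Type*}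
    [TopologicalSpace K] [CompactSpace K] [T2Space K]
    [ConnectedSpace K] [TopologicalSpace.SeparableSpace K]
    (hnot : ¬ ∃ f : K → ((Cardinal.aleph 1).ord.ToType → unitInterval),
      Continuous f ∧ Function.Surjective f)
    (L : Type*) [TopologicalSpace L] [CompactSpace L] [T2Space L]
    [TotallyDisconnectedSpace L]
    (hL : IsBooleanImage L K) : TopologicalSpace.MetrizableSpace L :=
  metrizable_of_boolean_image_of_separable_connected_general hnot L hL
end

section
/- Let T be a tree and let L ⊆ 2^T be the tree space of T. Then there exists a compact connected Hausdorff space K such that L is a Boolean image of K. Moreover, if every chain (equivalently every branch) of T is countable, then there exists a path-connected compact Hausdorff space K such that L is a Boolean image of K. -/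
open Set

/-- The tree space of `T`: the characteristic functions (into `Bool`) of the
downward closed chains of `T`, as a subset of the Cantor cube `2^T`. -/
def TreeSpace (T : Type*) [PartialOrder T] : Set (T → Bool) :=
  {x | IsChain (· ≤ ·) {t | x t = true} ∧ ∀ s t : T, s ≤ t → x t = true → x s = true}

/-!
The compact space is the tree of arcs `arcSpace T ⊆ [0, 1]^T`, in which a point runs up a branch
of `T` by filling in an arc at each node; the clopen `{x | x t = true}` of the tree space
corresponds to the pseudoclopen `({f | f t = 1}, {f | f t ≠ 0})`.

Nodes ranging over a countable set can be filled in simultaneously along one path, each during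
its own subinterval of time, placed in the order of `T`; so every point is joined to `0` when
chains are countable. In general, `arcSpace T` is the directed intersection of the compact sets
cut out by the constraints on finitely many nodes, which are path-connected for that reason, and
is therefore connected.
-/

open scoped ENNReal

theorem Directed.isPreconnected_iInter {X ι : Type*} [TopologicalSpace X] [T2Space X]
    [Nonempty ι] {V : ι → Set X} (hV : Directed (· ⊇ ·) V) (hcomp : ∀ i, IsCompact (V i))
    (hconn : ∀ i, IsPreconnected (V i)) : IsPreconnected (⋂ i, V i) := by
  rw [isPreconnected_iff_subset_of_disjoint_closed]
  intro u v hu hv hcover huv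
  set A := ⋂ i, V i
  obtain ⟨i₀⟩ := ‹Nonempty ι›
  have hA : IsCompact A :=
    (hcomp i₀).of_isClosed_subset (isClosed_iInter fun i => (hcomp i).isClosed) (iInter_subset _ _)
  have hdisj : Disjoint (A ∩ u) (A ∩ v) := by
    rw [disjoint_iff_inter_eq_empty, ← huv]; ext; simp only [mem_inter_iff]; tauto
  obtain ⟨U, W, hU, hW, huU, hvW, hUW⟩ :=
    SeparatedNhds.of_isCompact_isCompact (hA.inter_right hu) (hA.inter_right hv) hdisj
  have hAUW : A ⊆ U ∪ W := fun x hx => (hcover hx).imp (fun h => huU ⟨hx, h⟩) (fun h => hvW ⟨hx, h⟩)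
  obtain ⟨i, hi⟩ := exists_subset_nhds_of_isCompact hV hcomp
    fun x hx => (hU.union hW).mem_nhds (hAUW hx)
  have hAi : A ⊆ V i := iInter_subset V i
  rcases (hconn i).subset_or_subset hU hW hUW hi with h | h
  · refine Or.inl fun x hx => (hcover hx).resolve_right fun hxv => ?_
    exact hUW.ne_of_mem (h (hAi hx)) (hvW ⟨hx, hxv⟩) rfl
  · refine Or.inr fun x hx => (hcover hx).resolve_left fun hxu => ?_
    exact hUW.ne_of_mem (huU ⟨hx, hxu⟩) (h (hAi hx)) rfl

theorem Set.Countable.exists_ordered_intervals {T : Type*} [Preorder T] {C : Set T}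
    (hC : C.Countable) : ∃ a w : T → ℝ≥0∞, (∀ t, w t ≠ 0 ∧ a t + w t ≤ 1) ∧
      ∀ s ∈ C, ∀ t ∈ C, s < t → a s + w s ≤ a t := by
  classical
  obtain ⟨e, he⟩ := countable_iff_exists_injOn.mp hC
  set w : T → ℝ≥0∞ := fun t => 2⁻¹ * 2⁻¹ ^ (e t + 1)
  set a : T → ℝ≥0∞ := fun t => ∑' c : C, if (c : T) < t then w c else 0
  have hgeom : ∑' n : ℕ, (2⁻¹ : ℝ≥0∞) ^ (n + 1) = 1 := by
    rw [ENNReal.tsum_geometric_add_one, ENNReal.one_sub_inv_two, inv_inv,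
      ENNReal.inv_mul_cancel two_ne_zero ENNReal.ofNat_ne_top]
  have hsum : ∑' c : C, w c ≤ 2⁻¹ := calc
    ∑' c : C, w c = 2⁻¹ * ∑' c : C, (2⁻¹ : ℝ≥0∞) ^ (C.domRestrict e c + 1) := ENNReal.tsum_mul_left
    _ ≤ 2⁻¹ * ∑' n : ℕ, (2⁻¹ : ℝ≥0∞) ^ (n + 1) := by
      gcongr; exact ENNReal.tsum_comp_le_tsum_of_injective he.injective _
    _ = 2⁻¹ := by rw [hgeom, mul_one]
  have hw : ∀ t, w t ≤ 2⁻¹ := fun t =>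
    mul_le_of_le_one_right' (pow_le_one₀ zero_le (ENNReal.inv_le_one.mpr one_le_two))
  refine ⟨a, w, fun t => ⟨by simp [w], ?_⟩, fun s hs t ht hst => ?_⟩
  · calc a t + w t ≤ 2⁻¹ + 2⁻¹ := by
          refine add_le_add ((ENNReal.tsum_le_tsum fun c => ?_).trans hsum) (hw t)
          split_ifs <;> simp
      _ = 1 := ENNReal.inv_two_add_inv_two
  · rw [show a t = _ from ENNReal.tsum_eq_add_tsum_ite ⟨s, hs⟩, if_pos hst, add_comm]
    refine add_le_add le_rfl (ENNReal.tsum_le_tsum fun c => ?_)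
    by_cases hcs : c = ⟨s, hs⟩
    · simp [hcs]
    · by_cases hc : (c : T) < s
      · simp [hcs, hc, hc.trans hst]
      · simp [hc]

section ArcSpace

variable {T : Type*} [PartialOrder T]

/-- Points are `f : T → [0, 1]` whose support is a downward closed chain on which `f` is `1`
except at a top element; only the constraints between nodes of `F` are imposed. -/
def arcSpaceOn (F : Set T) : Set (T → ℝ≥0∞) :=
  {f | f ≤ 1 ∧ ∀ s ∈ F, ∀ t ∈ F, f t ≠ 0 → (s < t → f s = 1) ∧ (f s ≠ 0 → s ≤ t ∨ t ≤ s)}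

variable (T) in
abbrev arcSpace : Set (T → ℝ≥0∞) := arcSpaceOn univ

lemma zero_mem_arcSpaceOn (F : Set T) : 0 ∈ arcSpaceOn F :=
  ⟨zero_le_one, fun _ _ _ _ h => absurd rfl h⟩

lemma arcSpaceOn_antitone : Antitone (arcSpaceOn (T := T)) := fun _ _ hFG _ hf =>
  ⟨hf.1, fun s hs t ht => hf.2 s (hFG hs) t (hFG ht)⟩

lemma isClosed_arcSpaceOn (F : Set T) : IsClosed (arcSpaceOn F) := by
  have hcoord (t : T) : Continuous fun f : T → ℝ≥0∞ => f t := continuous_apply t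
  have : arcSpaceOn F = {f | f ≤ 1} ∩ ⋂ s ∈ F, ⋂ t ∈ F,
      {f | f t ≠ 0 → (s < t → f s = 1) ∧ (f s ≠ 0 → s ≤ t ∨ t ≤ s)} := by
    ext; simp [arcSpaceOn]
  rw [this]
  refine (isClosed_le continuous_id continuous_const).inter
    (isClosed_biInter fun s _ => isClosed_biInter fun t _ => ?_)
  exact isClosed_imp (isOpen_ne_fun (hcoord t) continuous_const)
    ((isClosed_imp isOpen_const (isClosed_eq (hcoord s) continuous_const)).inter
      (isClosed_imp (isOpen_ne_fun (hcoord s) continuous_const) isClosed_const))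

instance : CompactSpace (arcSpace T) :=
  isCompact_iff_compactSpace.mp (isClosed_arcSpaceOn _).isCompact

lemma arcSpace_eq_iInter_finset : arcSpace T = ⋂ F : Finset T, arcSpaceOn (F : Set T) := by
  classical
  refine Subset.antisymm (subset_iInter fun _ => arcSpaceOn_antitone (subset_univ _)) fun f hf => ?_
  exact ⟨(mem_iInter.mp hf ∅).1, fun s _ t _ => (mem_iInter.mp hf {s, t}).2 s (by simp) t (by simp)⟩

lemma isChain_support_of_mem_arcSpaceOn {F : Set T} {f : T → ℝ≥0∞} (hf : f ∈ arcSpaceOn F) :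
    IsChain (· ≤ ·) (F ∩ {t | f t ≠ 0}) := fun s hs t ht _ =>
  (hf.2 s hs.1 t ht.1 ht.2).2 hs.2

/-- The path raises `g t` from `0` while its parameter crosses `[a t, a t + w t]`. -/
lemma joinedIn_zero_of_ordered_intervals {F : Set T} {g : T → ℝ≥0∞} (hg : g ∈ arcSpaceOn F)
    {a w : T → ℝ≥0∞} (hbound : ∀ t, w t ≠ 0 ∧ a t + w t ≤ 1)
    (hmono : ∀ s ∈ F, ∀ t ∈ F, g s ≠ 0 → g t ≠ 0 → s < t → a s + w s ≤ a t) :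
    JoinedIn (arcSpaceOn F) 0 g := by
  set γ : unitInterval → T → ℝ≥0∞ := fun r t => min (g t) ((ENNReal.ofReal r - a t) / w t)
  have hfull {r : ℝ≥0∞} {t : T} (h : a t + w t ≤ r) : 1 ≤ (r - a t) / w t := by
    obtain ⟨ha, hw⟩ := ENNReal.add_ne_top.mp (ne_top_of_le_ne_top ENNReal.one_ne_top (hbound t).2)
    rw [ENNReal.le_div_iff_mul_le (Or.inl (hbound t).1) (Or.inl hw), one_mul]
    exact ENNReal.le_sub_of_add_le_left ha h
  have hcont : Continuous γ := continuous_pi fun t => continuous_const.min <|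
    (ENNReal.continuous_div_const _ (hbound t).1).comp <|
      (ENNReal.continuous_sub_right _).comp (ENNReal.continuous_ofReal.comp continuous_subtype_val)
  have hγ0 : γ 0 = 0 := by funext t; simp [γ]
  have hγ1 : γ 1 = g := by
    funext t
    refine min_eq_left ((hg.1 t).trans (hfull ?_))
    simpa using (hbound t).2
  have hγle (r : unitInterval) : γ r ≤ g := fun t => min_le_left _ _
  have hmem (r : unitInterval) : γ r ∈ arcSpaceOn F := by
    refine ⟨(hγle r).trans hg.1, fun s hs t ht hγt => ?_⟩
    have hgt : g t ≠ 0 := fun h => hγt (le_antisymm (h ▸ hγle r t) zero_le)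
    have hat : a t < ENNReal.ofReal r := by
      have : (ENNReal.ofReal r - a t) / w t ≠ 0 := fun h => hγt (by simp [γ, h])
      exact tsub_pos_iff_lt.mp (pos_iff_ne_zero.mpr fun h => this (by simp [h]))
    refine ⟨fun hst => ?_, fun hγs => (hg.2 s hs t ht hgt).2 fun h => hγs ?_⟩
    · have hgs : g s = 1 := (hg.2 s hs t ht hgt).1 hst
      have hint := hmono s hs t ht (by simp [hgs]) hgt hst
      exact (congrArg₂ min hgs rfl).trans (min_eq_left (hfull (hint.trans hat.le)))
    · exact le_antisymm (h ▸ hγle r s) zero_le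
  exact ⟨⟨⟨γ, hcont⟩, hγ0, hγ1⟩, hmem⟩

lemma isPathConnected_arcSpaceOn {F : Set T}
    (hF : ∀ g ∈ arcSpaceOn F, (F ∩ {t | g t ≠ 0}).Countable) :
    IsPathConnected (arcSpaceOn F) := by
  refine ⟨0, zero_mem_arcSpaceOn F, fun g hg => ?_⟩
  obtain ⟨a, w, hbound, hmono⟩ := (hF g hg).exists_ordered_intervals
  exact joinedIn_zero_of_ordered_intervals hg hbound
    fun s hs t ht hgs hgt => hmono s ⟨hs, hgs⟩ t ⟨ht, hgt⟩

lemma isPathConnected_arcSpace (hchains : ∀ c : Set T, IsChain (· ≤ ·) c → c.Countable) :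
    IsPathConnected (arcSpace T) :=
  isPathConnected_arcSpaceOn fun _ hg => hchains _ (isChain_support_of_mem_arcSpaceOn hg)

lemma isConnected_arcSpace : IsConnected (arcSpace T) := by
  refine ⟨⟨0, zero_mem_arcSpaceOn _⟩, ?_⟩
  rw [arcSpace_eq_iInter_finset]
  refine Directed.isPreconnected_iInter (arcSpaceOn_antitone.comp_monotone
      fun _ _ => Finset.coe_subset.mpr).directed_ge
    (fun F => (isClosed_arcSpaceOn _).isCompact) fun F => ?_
  refine (isPathConnected_arcSpaceOn fun g _ => ?_).isConnected.isPreconnected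
  exact F.finite_toSet.countable.mono inter_subset_left

end ArcSpace

section TreeSpace

variable {T : Type*} [PartialOrder T]

lemma exists_mem_treeSpace_iff {D : Set T} (hchain : IsChain (· ≤ ·) D) (hlower : IsLowerSet D) :
    ∃ x ∈ TreeSpace T, ∀ t, x t = true ↔ t ∈ D := by
  classical
  exact ⟨fun t => decide (t ∈ D), ⟨by simpa using hchain,
    fun _ _ hst ht => by simpa using hlower hst (by simpa using ht)⟩, by simp⟩

lemma isChain_Iic_of_isChain_Iio (hT : ∀ t : T, IsChain (· ≤ ·) (Iio t)) (t : T) :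
    IsChain (· ≤ ·) (Iic t) := by
  rw [← Iio_insert]
  exact (hT t).insert fun s hs _ => Or.inr hs.le

lemma isChain_lowerClosure (hT : ∀ t : T, IsChain (· ≤ ·) (Iio t)) {S : Set T}
    (hS : IsChain (· ≤ ·) S) : IsChain (· ≤ ·) (lowerClosure S : Set T) := by
  rintro u ⟨t₁, ht₁, hu⟩ v ⟨t₂, ht₂, hv⟩ -
  rcases hS.total ht₁ ht₂ with h | h
  · exact (isChain_Iic_of_isChain_Iio hT t₂).total (hu.trans h) hv
  · exact (isChain_Iic_of_isChain_Iio hT t₁).total hu (hv.trans h)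

lemma ite_mem_arcSpace {x : T → Bool} (hx : x ∈ TreeSpace T) :
    (fun t => if x t = true then (1 : ℝ≥0∞) else 0) ∈ arcSpace T := by
  refine ⟨fun t => by by_cases h : x t = true <;> simp [h], fun s _ t _ ht => ?_⟩
  have hxt : x t = true := by by_contra h; simp [h] at ht
  refine ⟨fun hst => by simp [hx.2 s t hst.le hxt], fun hs => ?_⟩
  have hxs : x s = true := by by_contra h; simp [h] at hs
  rcases eq_or_ne s t with rfl | hne
  · exact Or.inl le_rfl
  · exact hx.1 hxs hxt hne

def TreeSpace.cylinder (t : T) : Set (TreeSpace T) := {x | x.1 t = true}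

def arcPseudoclopen (t : T) : Set (arcSpace T) × Set (arcSpace T) :=
  ({g | g.1 t = 1}, {g | g.1 t ≠ 0})

lemma TreeSpace.isClopen_cylinder (t : T) : IsClopen (TreeSpace.cylinder t) :=
  (isClopen_discrete {true}).preimage ((continuous_apply t).comp continuous_subtype_val)

lemma TreeSpace.cylinder_injective (hT : ∀ t : T, IsChain (· ≤ ·) (Iio t)) :
    Function.Injective (TreeSpace.cylinder (T := T)) := by
  have hle {s t : T} (h : TreeSpace.cylinder s = TreeSpace.cylinder t) : s ≤ t := by
    obtain ⟨x, hx, hxt⟩ :=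
      exists_mem_treeSpace_iff (isChain_Iic_of_isChain_Iio hT t) (isLowerSet_Iic t)
    have hmem : (⟨x, hx⟩ : TreeSpace T) ∈ TreeSpace.cylinder t := (hxt t).mpr le_rfl
    rw [← h] at hmem
    exact (hxt s).mp hmem
  exact fun s t h => le_antisymm (hle h) (hle h.symm)

lemma arcPseudoclopen_injective (hT : ∀ t : T, IsChain (· ≤ ·) (Iio t)) :
    Function.Injective (arcPseudoclopen (T := T)) := by
  refine fun s t h => TreeSpace.cylinder_injective hT (ext fun x => ?_)
  have hpos (u : T) : x ∈ TreeSpace.cylinder u ↔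
      (⟨_, ite_mem_arcSpace x.2⟩ : arcSpace T) ∈ (arcPseudoclopen u).2 := by
    simp [TreeSpace.cylinder, arcPseudoclopen]
  rw [hpos, hpos, h]

lemma nonempty_cylinders_of_nonempty_arcPseudoclopens (hT : ∀ t : T, IsChain (· ≤ ·) (Iio t))
    {S R : Set T} (hSR : Disjoint S R)
    (h : ((⋂ t ∈ S, (arcPseudoclopen t).2) \ ⋃ s ∈ R, (arcPseudoclopen s).1).Nonempty) :
    ((⋂ t ∈ S, TreeSpace.cylinder t) \ ⋃ s ∈ R, TreeSpace.cylinder s).Nonempty := by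
  obtain ⟨⟨g, hg⟩, hgS, hgR⟩ := h
  simp only [mem_iInter₂, mem_iUnion₂, not_exists] at hgS hgR
  have hchain : IsChain (· ≤ ·) S := (isChain_support_of_mem_arcSpaceOn hg).mono
    fun t ht => show t ∈ univ ∩ _ from ⟨mem_univ t, hgS t ht⟩
  obtain ⟨x, hx, hxS⟩ :=
    exists_mem_treeSpace_iff (isChain_lowerClosure hT hchain) (lowerClosure S).lower
  refine ⟨⟨x, hx⟩, mem_iInter₂.mpr fun t ht => (hxS t).mpr (subset_lowerClosure ht), ?_⟩
  simp only [mem_iUnion₂, not_exists]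
  intro s hs hxs
  obtain ⟨t, ht, hst⟩ := mem_lowerClosure.mp ((hxS s).mp hxs)
  rcases hst.eq_or_lt with rfl | hlt
  · exact hSR.ne_of_mem ht hs rfl
  · exact hgR s hs ((hg.2 s (mem_univ s) t (mem_univ t) (hgS t ht)).1 hlt)

lemma nonempty_arcPseudoclopens_of_nonempty_cylinders {S R : Set T}
    (h : ((⋂ t ∈ S, TreeSpace.cylinder t) \ ⋃ s ∈ R, TreeSpace.cylinder s).Nonempty) :
    ((⋂ t ∈ S, (arcPseudoclopen t).1) \ ⋃ s ∈ R, (arcPseudoclopen s).2).Nonempty := by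
  obtain ⟨x, hxS, hxR⟩ := h
  simp only [mem_iInter₂, mem_iUnion₂, not_exists] at hxS hxR
  refine ⟨⟨_, ite_mem_arcSpace x.2⟩, ?_⟩
  simp only [mem_sdiff, mem_iInter₂, mem_iUnion₂, not_exists, arcPseudoclopen, mem_ofPred_eq]
  exact ⟨fun t ht => if_pos (hxS t ht), fun s hs => not_not_intro (if_neg (hxR s hs))⟩

lemma isBooleanImage_arcSpace (hT : ∀ t : T, IsChain (· ≤ ·) (Iio t)) :
    IsBooleanImage (TreeSpace T) (arcSpace T) := by
  set φ : Set (TreeSpace T) → Set (arcSpace T) × Set (arcSpace T) :=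
    Function.extend TreeSpace.cylinder arcPseudoclopen fun _ => (∅, ∅)
  have hφ (t : T) : φ (TreeSpace.cylinder t) = arcPseudoclopen t :=
    (TreeSpace.cylinder_injective hT).extend_apply _ _ t
  refine ⟨range TreeSpace.cylinder, φ, ?_, ?_, ?_, ?_, ?_⟩
  · rintro _ ⟨t, rfl⟩
    exact TreeSpace.isClopen_cylinder t
  · intro x y hxy
    obtain ⟨t, ht⟩ := Function.ne_iff.mp fun h => hxy (Subtype.ext h)
    refine ⟨_, mem_range_self t, ?_⟩
    cases hx : x.1 t <;> cases hy : y.1 t <;> simp_all [TreeSpace.cylinder]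
  · rintro _ ⟨s, rfl⟩ _ ⟨t, rfl⟩ h
    rw [hφ, hφ] at h
    rw [arcPseudoclopen_injective hT h]
  · rintro _ ⟨t, rfl⟩
    rw [hφ]
    refine ⟨isClosed_eq ((continuous_apply t).comp continuous_subtype_val) continuous_const,
      isOpen_ne_fun ((continuous_apply t).comp continuous_subtype_val) continuous_const,
      fun g (hg : g.1 t = 1) => ?_⟩
    simp [arcPseudoclopen, hg]
  · intro F H _ _ hF hH hFH
    obtain ⟨S, rfl⟩ : ∃ S, TreeSpace.cylinder '' S = F := ⟨_, image_preimage_eq_of_subset hF⟩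
    obtain ⟨R, rfl⟩ : ∃ R, TreeSpace.cylinder '' R = H := ⟨_, image_preimage_eq_of_subset hH⟩
    rw [disjoint_image_iff (TreeSpace.cylinder_injective hT)] at hFH
    simp only [sInter_image, sUnion_image, biInter_image, biUnion_image, hφ]
    refine ⟨fun h => ?_, fun h => ?_⟩ <;> contrapose! h
    · exact nonempty_cylinders_of_nonempty_arcPseudoclopens hT hFH h
    · exact nonempty_arcPseudoclopens_of_nonempty_cylinders h

end TreeSpace

theorem tree_space_boolean_image_general {T : Type u} [PartialOrder T]
    (htree : ∀ t : T, IsChain (· ≤ ·) {s | s < t} ∧ Set.IsWF {s | s < t}) :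
    (∃ (K : Type u) (_ : TopologicalSpace K) (_ : CompactSpace K) (_ : T2Space K)
       (_ : ConnectedSpace K), IsBooleanImage ↥(TreeSpace T) K) ∧
    ((∀ c : Set T, IsChain (· ≤ ·) c → c.Countable) →
      ∃ (K : Type u) (_ : TopologicalSpace K) (_ : CompactSpace K) (_ : T2Space K)
        (_ : PathConnectedSpace K), IsBooleanImage ↥(TreeSpace T) K) := by
  have hT (t : T) : IsChain (· ≤ ·) (Iio t) := (htree t).1
  exact ⟨⟨arcSpace T, inferInstance, inferInstance, inferInstance,
    isConnected_iff_connectedSpace.mp isConnected_arcSpace, isBooleanImage_arcSpace hT⟩,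
    fun hchains => ⟨arcSpace T, inferInstance, inferInstance, inferInstance,
      isPathConnected_iff_pathConnectedSpace.mp (isPathConnected_arcSpace hchains),
      isBooleanImage_arcSpace hT⟩⟩

/-- The tree space of a tree `T` is a Boolean image of a compact
connected Hausdorff space; if all chains of `T` are countable, it is a Boolean
image of a path-connected compact Hausdorff space. -/
theorem tree_space_boolean_image {T : Type u} [PartialOrder T] [OrderBot T]
    (htree : ∀ t : T, IsChain (· ≤ ·) {s | s < t} ∧ Set.IsWF {s | s < t}) :
    (∃ (K : Type u) (_ : TopologicalSpace K) (_ : CompactSpace K) (_ : T2Space K)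
       (_ : ConnectedSpace K), IsBooleanImage ↥(TreeSpace T) K) ∧
    ((∀ c : Set T, IsChain (· ≤ ·) c → c.Countable) →
      ∃ (K : Type u) (_ : TopologicalSpace K) (_ : CompactSpace K) (_ : T2Space K)
        (_ : PathConnectedSpace K), IsBooleanImage ↥(TreeSpace T) K) :=
  tree_space_boolean_image_general htree
end

section
/- Let Γ be a set, let K be a convex compact subset of [0,1]^Γ, let L be a compact zero-dimensional Hausdorff space, and let 𝒢 be a family of clopen subsets of L which is isomorphic to a family of pseudoclopens of K. Then there is a countable decomposition 𝒢 = ⋃_{n<ω} 𝒢ₙ such that for every x, y ∈ L and every n < ω there exists a further finite decomposition 𝒢ₙ = ⋃_{m=0}^{n} 𝒢ₙₘ such that for every m ≤ n and every partition 𝒢ₙₘ = ℱ ∪ ℋ into disjoint pieces with ℱ ⊇ {a ∈ 𝒢ₙₘ : x,y ∈ a} and ℋ ⊇ {a ∈ 𝒢ₙₘ : x,y ∉ a}, one has ⋂ℱ \ ⋃ℋ ≠ ∅. In particular, for every m ≤ n the family 𝒢ₙₘ(x,y) of those a ∈ 𝒢ₙₘ that contain exactly one of x, y is independent. -/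
/-!
By compactness of `K`, the closed part of every pseudoclopen is separated from the complement of
its open part by a gap `1/(n+1)` in some coordinate; `𝒢ₙ` collects the members with gap `1/(n+1)`.
Given `x, y ∈ L`, compactness of `K` and the isomorphism give points `p, q ∈ K` lying in the
pseudoclopens as `x, y` lie in the clopens, and convexity puts the segment `[p, q]` inside `K`.
As coordinates lie in `[0, 1]`, along this segment the two parts of a member of `𝒢ₙ` are at
parameter distance at least `1/(n+1)`, so each member changes side within one of `n + 1` intervals
of length `1/(n+1)`. All members assigned to the `m`-th interval are then in the required position
at every parameter slightly larger than `m/(n+1)`, and the isomorphism transfers such a point back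
to `L`; compactness of `L` passes from finite to arbitrary partitions.
-/

open Set

open Filter Topology
open AffineMap (lineMap lineMap_apply_module)

theorem CompactSpace.nonempty_biInter_diff_biUnion {X ι : Type*} [TopologicalSpace X]
    [CompactSpace X] {F H : Set ι} {f g : ι → Set X} (hf : ∀ i ∈ F, IsClosed (f i))
    (hg : ∀ j ∈ H, IsOpen (g j))
    (h : ∀ F' ⊆ F, ∀ H' ⊆ H, F'.Finite → H'.Finite →
      ((⋂ i ∈ F', f i) \ ⋃ j ∈ H', g j).Nonempty) :
    ((⋂ i ∈ F, f i) \ ⋃ j ∈ H, g j).Nonempty := by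
  set t : F ⊕ H → Set X := Sum.elim (fun i => f i) (fun j => (g j)ᶜ)
  have ht : ∀ k, IsClosed (t k) := by
    rintro (i | j)
    exacts [hf i i.2, (hg j j.2).isClosed_compl]
  obtain ⟨w, -, hw⟩ := isCompact_univ.inter_iInter_nonempty t ht fun u => by
    obtain ⟨w, hwf, hwg⟩ := h (Subtype.val '' (u.toLeft : Set F)) (by simp)
      (Subtype.val '' (u.toRight : Set H)) (by simp) (u.toLeft.finite_toSet.image _)
      (u.toRight.finite_toSet.image _)
    refine ⟨w, trivial, mem_iInter₂.2 ?_⟩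
    rintro (i | j) hk
    · exact mem_iInter₂.1 hwf i ⟨i, by simpa using hk, rfl⟩
    · exact fun hj => hwg (mem_iUnion₂.2 ⟨j, ⟨j, by simpa using hk, rfl⟩, hj⟩)
  exact ⟨w, by simpa [t, iInter_sum] using hw⟩

def PairIndepFamily {X : Type*} (x y : X) (𝒜 : Set (Set X)) : Prop :=
  ∀ F H : Set (Set X), F.Finite → H.Finite → F ⊆ 𝒜 → H ⊆ 𝒜 → Disjoint F H →
    (∀ a ∈ F, x ∈ a ∨ y ∈ a) → (∀ a ∈ H, x ∉ a ∨ y ∉ a) → (⋂₀ F \ ⋃₀ H).Nonempty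

namespace PairIndepFamily

variable {X : Type*} {x y : X} {𝒜 : Set (Set X)}

theorem indepFamily (h : PairIndepFamily x y 𝒜) :
    IndepFamily {a ∈ 𝒜 | (x ∈ a ∧ y ∉ a) ∨ (y ∈ a ∧ x ∉ a)} :=
  fun F H hF hH hF𝒜 hH𝒜 hFH =>
    h F H hF hH (fun _ ha => (hF𝒜 ha).1) (fun _ ha => (hH𝒜 ha).1) hFH
      (fun _ ha => by have := (hF𝒜 ha).2; tauto) (fun _ ha => by have := (hH𝒜 ha).2; tauto)

theorem nonempty_sInter_diff_sUnion [TopologicalSpace X] [CompactSpace X]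
    (h : PairIndepFamily x y 𝒜) (h𝒜 : ∀ a ∈ 𝒜, IsClopen a) {F H : Set (Set X)}
    (hFH : F ∪ H = 𝒜) (hdisj : Disjoint F H) (hF : {a ∈ 𝒜 | x ∈ a ∧ y ∈ a} ⊆ F)
    (hH : {a ∈ 𝒜 | x ∉ a ∧ y ∉ a} ⊆ H) : (⋂₀ F \ ⋃₀ H).Nonempty := by
  have hF𝒜 : F ⊆ 𝒜 := hFH ▸ subset_union_left
  have hH𝒜 : H ⊆ 𝒜 := hFH ▸ subset_union_right
  have := CompactSpace.nonempty_biInter_diff_biUnion (f := fun a => a) (g := fun a => a)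
    (fun a ha => (h𝒜 a (hF𝒜 ha)).isClosed) (fun a ha => (h𝒜 a (hH𝒜 ha)).isOpen)
    fun F' hF' H' hH' hF'f hH'f => by
      simpa only [← sInter_eq_biInter, ← sUnion_eq_biUnion] using
        h F' H' hF'f hH'f (hF'.trans hF𝒜) (hH'.trans hH𝒜) (hdisj.mono hF' hH')
          (fun a ha => by_contra fun hxy =>
            disjoint_left.1 hdisj (hF' ha) (hH ⟨hF𝒜 (hF' ha), not_or.1 hxy⟩))
          (fun a ha => not_and_or.1 fun hxy =>
            disjoint_left.1 hdisj (hF ⟨hH𝒜 (hH' ha), hxy⟩) (hH' ha))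
  simpa only [← sInter_eq_biInter, ← sUnion_eq_biUnion] using this

end PairIndepFamily

namespace IsPseudoclopenIso

variable {X K : Type*} [TopologicalSpace K] {𝒢 : Set (Set X)} {φ : Set X → Set K × Set K}

theorem exists_point_realizing [CompactSpace K] (hφ : IsPseudoclopenIso 𝒢 φ) (w : X) :
    ∃ p : K, ∀ a ∈ 𝒢, (w ∈ a → p ∈ (φ a).1) ∧ (w ∉ a → p ∉ (φ a).2) := by
  obtain ⟨p, hpF, hpH⟩ := CompactSpace.nonempty_biInter_diff_biUnion
    (F := {a ∈ 𝒢 | w ∈ a}) (H := {a ∈ 𝒢 | w ∉ a}) (f := fun a => (φ a).1)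
    (g := fun a => (φ a).2) (fun a ha => (hφ.2.1 a ha.1).1) (fun a ha => (hφ.2.1 a ha.1).2.1)
    fun F' hF' H' hH' hF'f hH'f => by
      rw [nonempty_iff_ne_empty]
      intro hempty
      have hdisj : Disjoint F' H' := disjoint_left.2 fun a ha ha' => (hH' ha').2 (hF' ha).2
      have := (hφ.2.2 F' H' hF'f hH'f (hF'.trans (sep_subset _ _))
        (hH'.trans (sep_subset _ _)) hdisj).2 hempty
      exact (eq_empty_iff_forall_notMem.1 this) w
        ⟨fun a ha => (hF' ha).2, fun ⟨a, ha, hwa⟩ => (hH' ha).2 hwa⟩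
  exact ⟨p, fun a ha => ⟨fun hw => mem_iInter₂.1 hpF a ⟨ha, hw⟩,
    fun hw hp => hpH (mem_iUnion₂.2 ⟨a, ⟨ha, hw⟩, hp⟩)⟩⟩

theorem pairIndepFamily (hφ : IsPseudoclopenIso 𝒢 φ) {𝒜 : Set (Set X)} (h𝒜 : 𝒜 ⊆ 𝒢)
    {x y : X} {ι : Type*} {l : Filter ι} [l.NeBot] (z : ι → K)
    (hz : ∀ a ∈ 𝒜, ∀ᶠ t in l,
      (x ∈ a ∨ y ∈ a → z t ∈ (φ a).2) ∧ (x ∉ a ∨ y ∉ a → z t ∉ (φ a).1)) :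
    PairIndepFamily x y 𝒜 := by
  intro F H hF hH hF𝒜 hH𝒜 hFH hFxy hHxy
  obtain ⟨t, ht⟩ := ((hF.union hH).eventually_all.2 fun a ha =>
    hz a (ha.elim (hF𝒜 ·) (hH𝒜 ·))).exists
  rw [nonempty_iff_ne_empty]
  intro hempty
  have := (hφ.2.2 F H hF hH (hF𝒜.trans h𝒜) (hH𝒜.trans h𝒜) hFH).1 hempty
  refine (eq_empty_iff_forall_notMem.1 this) (z t)
    ⟨mem_iInter₂.2 fun a ha => (ht a (.inl ha)).1 (hFxy a ha), ?_⟩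
  simp only [mem_iUnion, not_exists]
  exact fun a ha => (ht a (.inr ha)).2 (hHxy a ha)

end IsPseudoclopenIso

/-- The product topology on `Γ → ℝ` need not be metrizable; a gap in some coordinate stands in
for a positive distance between the two sets. -/
def CoordSeparated {Γ : Type*} (δ : ℝ) (A C : Set (Γ → ℝ)) : Prop :=
  ∀ u ∈ A, ∀ v ∈ C, ∃ γ, δ ≤ |u γ - v γ|

section CoordSeparated

variable {Γ : Type*} {A C : Set (Γ → ℝ)}

theorem IsCompact.exists_coordSeparated (hA : IsCompact A) (hC : IsCompact C)
    (hAC : Disjoint A C) : ∃ n : ℕ, CoordSeparated ((n + 1 : ℝ)⁻¹) A C := by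
  set W : ℕ → Set ((Γ → ℝ) × (Γ → ℝ)) :=
    fun k => ⋃ γ, {uv | (k + 1 : ℝ)⁻¹ < |uv.1 γ - uv.2 γ|}
  have hWo : ∀ k, IsOpen (W k) := fun k =>
    isOpen_iUnion fun γ => isOpen_lt continuous_const (by fun_prop)
  have hWmono : Monotone W := fun k l hkl =>
    iUnion_mono fun _ _ huv =>
      (show ((l : ℝ) + 1)⁻¹ ≤ ((k : ℝ) + 1)⁻¹ by gcongr).trans_lt huv
  have hcover : A ×ˢ C ⊆ ⋃ k, W k := by
    rintro ⟨u, v⟩ ⟨hu, hv⟩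
    obtain ⟨γ, hγ⟩ := Function.ne_iff.1 (hAC.ne_of_mem hu hv)
    obtain ⟨k, hk⟩ := exists_nat_one_div_lt (abs_pos.2 (sub_ne_zero.2 hγ))
    exact mem_iUnion.2 ⟨k, mem_iUnion.2 ⟨γ, by simpa using hk⟩⟩
  obtain ⟨n, hn⟩ := (hA.prod hC).elim_directed_cover W hWo hcover hWmono.directed_le
  refine ⟨n, fun u hu v hv => ?_⟩
  obtain ⟨γ, hγ⟩ := mem_iUnion.1 (hn (mk_mem_prod hu hv))
  exact ⟨γ, le_of_lt hγ⟩

theorem CoordSeparated.le_abs_sub {δ : ℝ} (h : CoordSeparated δ A C) {p q : Γ → ℝ}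
    (hpq : ∀ γ, |q γ - p γ| ≤ 1) {s t : ℝ} (hs : lineMap p q s ∈ A)
    (ht : lineMap p q t ∈ C) :
    δ ≤ |s - t| := by
  obtain ⟨γ, hγ⟩ := h _ hs _ ht
  calc δ ≤ |lineMap p q s γ - lineMap p q t γ| := hγ
    _ = |s - t| * |q γ - p γ| := by
      rw [← abs_mul]
      simp only [lineMap_apply_module, Pi.add_apply, Pi.smul_apply, smul_eq_mul]
      ring_nf
    _ ≤ |s - t| := mul_le_of_le_one_right (abs_nonneg _) (hpq γ)

end CoordSeparated

theorem exists_nat_div_lt_le (n : ℕ) {r : ℝ} (h0 : 0 < r) (h1 : r ≤ 1) :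
    ∃ m ≤ n, (m : ℝ) / (n + 1) < r ∧ r ≤ m / (n + 1) + (n + 1 : ℝ)⁻¹ := by
  have hn : (0 : ℝ) < n + 1 := by positivity
  set k := ⌈r * (n + 1)⌉₊
  have hk : 1 ≤ k := Nat.one_le_ceil_iff.2 (by positivity)
  have hkn : k ≤ n + 1 := Nat.ceil_le.2 (by push_cast; nlinarith)
  have hcast : ((k - 1 : ℕ) : ℝ) = k - 1 := by push_cast [Nat.cast_sub hk]; ring
  refine ⟨k - 1, by omega, ?_, ?_⟩
  · rw [hcast, div_lt_iff₀ hn]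
    linarith [Nat.ceil_lt_add_one (by positivity : 0 ≤ r * (n + 1))]
  · have hsum : ((k : ℝ) - 1) / (n + 1) + (n + 1 : ℝ)⁻¹ = k / (n + 1) := by field_simp; ring
    rw [hcast, hsum, le_div_iff₀ hn]
    exact Nat.le_ceil _

section Separated

variable {S T : Set ℝ}

theorem notMem_of_abs_sub_lt_of_mem_closure {δ : ℝ}
    (hsep : ∀ s ∈ S, ∀ t ∈ T, δ ≤ |s - t|) {t u : ℝ} (hu : u ∈ closure T)
    (ht : |t - u| < δ) : t ∉ S := by
  intro htS
  obtain ⟨v, hv, huv⟩ := Metric.mem_closure_iff.1 hu _ (sub_pos.2 ht)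
  rw [Real.dist_eq] at huv
  linarith [hsep t htS v hv, abs_sub_le t u v]

variable {n : ℕ}

theorem exists_eventually_notMem_of_zero_mem_of_one_mem
    (hsep : ∀ s ∈ S, ∀ t ∈ T, (n + 1 : ℝ)⁻¹ ≤ |s - t|)
    (hT : T ⊆ Icc 0 1) (h0 : 0 ∈ S) (h1 : 1 ∈ T) :
    ∃ m ≤ n, ∀ᶠ t in 𝓝[>] ((m : ℝ) / (n + 1)), t ∉ T ∧ t ∉ S := by
  have hbdd : BddBelow T := ⟨0, fun t ht => (hT ht).1⟩
  have hU : (n + 1 : ℝ)⁻¹ ≤ sInf T := le_csInf ⟨1, h1⟩ fun t ht => by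
    simpa [abs_of_nonneg (hT ht).1] using hsep 0 h0 t ht
  obtain ⟨m, hmn, hlt, hle⟩ :=
    exists_nat_div_lt_le n ((by positivity : (0 : ℝ) < (n + 1 : ℝ)⁻¹).trans_le hU)
      (csInf_le hbdd h1)
  refine ⟨m, hmn, ?_⟩
  filter_upwards [self_mem_nhdsWithin, nhdsWithin_le_nhds (Iio_mem_nhds hlt)]
    with t (hmt : (m : ℝ) / (n + 1) < t) (htU : t < sInf T)
  refine ⟨notMem_of_lt_csInf htU hbdd,
    notMem_of_abs_sub_lt_of_mem_closure hsep (csInf_mem_closure ⟨1, h1⟩ hbdd) ?_⟩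
  rw [abs_sub_lt_iff]
  constructor <;> linarith

theorem exists_eventually_notMem_of_one_mem_of_zero_mem
    (hsep : ∀ s ∈ S, ∀ t ∈ T, (n + 1 : ℝ)⁻¹ ≤ |s - t|)
    (hT : T ⊆ Icc 0 1) (h1 : 1 ∈ S) (h0 : 0 ∈ T) :
    ∃ m ≤ n, ∀ᶠ t in 𝓝[>] ((m : ℝ) / (n + 1)), t ∉ T ∧ t ∉ S := by
  have hbdd : BddAbove T := ⟨1, fun t ht => (hT ht).2⟩
  have hV : sSup T + (n + 1 : ℝ)⁻¹ ≤ 1 := by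
    suffices sSup T ≤ 1 - (n + 1 : ℝ)⁻¹ by linarith
    refine csSup_le ⟨0, h0⟩ fun t ht => ?_
    have := hsep 1 h1 t ht
    rw [abs_of_nonneg (by linarith [(hT ht).2])] at this
    linarith
  have hV0 : 0 ≤ sSup T := le_csSup hbdd h0
  -- so that `sSup T ≤ m / (n + 1) < sSup T + (n + 1)⁻¹`
  obtain ⟨m, hmn, hlt, hle⟩ := exists_nat_div_lt_le n (by positivity) hV
  refine ⟨m, hmn, ?_⟩
  filter_upwards [self_mem_nhdsWithin, nhdsWithin_le_nhds (Iio_mem_nhds hlt)]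
    with t (hmt : (m : ℝ) / (n + 1) < t) (htV : t < sSup T + (n + 1 : ℝ)⁻¹)
  refine ⟨notMem_of_csSup_lt (by linarith) hbdd,
    notMem_of_abs_sub_lt_of_mem_closure hsep (csSup_mem_closure ⟨0, h0⟩ hbdd) ?_⟩
  rw [abs_sub_lt_iff]
  constructor <;> linarith

theorem exists_eventually_notMem (hsep : ∀ s ∈ S, ∀ t ∈ T, (n + 1 : ℝ)⁻¹ ≤ |s - t|)
    (hT : T ⊆ Icc 0 1) (h0 : 0 ∈ S ∨ 0 ∈ T) (h1 : 1 ∈ S ∨ 1 ∈ T) :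
    ∃ m ≤ n, ∀ᶠ t in 𝓝[>] ((m : ℝ) / (n + 1)),
      (0 ∈ S ∨ 1 ∈ S → t ∉ T) ∧ (0 ∈ T ∨ 1 ∈ T → t ∉ S) := by
  have hδ : (0 : ℝ) < (n + 1 : ℝ)⁻¹ := by positivity
  have hsep' : ∀ t ∈ T, ∀ s ∈ S, (n + 1 : ℝ)⁻¹ ≤ |t - s| := fun t ht s hs =>
    abs_sub_comm s t ▸ hsep s hs t ht
  have hdisj : ∀ u ∈ S, u ∉ T := fun u hS hT => by
    simpa using hδ.trans_le (hsep u hS u hT)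
  have hnear : ∀ᶠ t in 𝓝[>] (((0 : ℕ) : ℝ) / (n + 1)), |t - 0| < (n + 1 : ℝ)⁻¹ := by
    rw [Nat.cast_zero, zero_div]
    filter_upwards [Ioo_mem_nhdsGT hδ] with t ht
    rw [sub_zero, abs_of_pos ht.1]
    exact ht.2
  rcases h0 with h0 | h0 <;> rcases h1 with h1 | h1
  · refine ⟨0, n.zero_le, hnear.mono fun t ht => ⟨fun _ => ?_, fun h => ?_⟩⟩
    · exact notMem_of_abs_sub_lt_of_mem_closure hsep' (subset_closure h0) ht
    · exact (h.elim (hdisj 0 h0) (hdisj 1 h1)).elim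
  · obtain ⟨m, hm, h⟩ := exists_eventually_notMem_of_zero_mem_of_one_mem hsep hT h0 h1
    exact ⟨m, hm, h.mono fun t ht => ⟨fun _ => ht.1, fun _ => ht.2⟩⟩
  · obtain ⟨m, hm, h⟩ := exists_eventually_notMem_of_one_mem_of_zero_mem hsep hT h1 h0
    exact ⟨m, hm, h.mono fun t ht => ⟨fun _ => ht.1, fun _ => ht.2⟩⟩
  · refine ⟨0, n.zero_le, hnear.mono fun t ht => ⟨fun h => ?_, fun _ => ?_⟩⟩
    · exact (h.elim (fun h => hdisj 0 h h0) (fun h => hdisj 1 h h1)).elim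
    · exact notMem_of_abs_sub_lt_of_mem_closure hsep (subset_closure h0) ht

end Separated

namespace Convex

variable {E : Type*} [AddCommGroup E] [Module ℝ E] {K : Set E}

noncomputable def clampedLineMap (hK : Convex ℝ K) (p q : K) (t : ℝ) : K :=
  ⟨lineMap (p : E) q (projIcc 0 1 zero_le_one t : ℝ),
    hK.lineMap_mem p.2 q.2 (projIcc 0 1 zero_le_one t).2⟩

theorem coe_clampedLineMap (hK : Convex ℝ K) (p q : K) {t : ℝ} (ht : t ∈ Icc 0 1) :
    (hK.clampedLineMap p q t : E) = lineMap (p : E) q t := by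
  simp [clampedLineMap, projIcc_of_mem _ ht]

theorem clampedLineMap_zero (hK : Convex ℝ K) (p q : K) : hK.clampedLineMap p q 0 = p :=
  Subtype.ext (by simp [hK.coe_clampedLineMap p q (left_mem_Icc.2 zero_le_one)])

theorem clampedLineMap_one (hK : Convex ℝ K) (p q : K) : hK.clampedLineMap p q 1 = q :=
  Subtype.ext (by simp [hK.coe_clampedLineMap p q (right_mem_Icc.2 zero_le_one)])

end Convex

theorem exists_eventually_clampedLineMap_mem {Γ : Type*} {K : Set (Γ → ℝ)}
    (hsub : ∀ x ∈ K, ∀ γ, x γ ∈ Icc (0 : ℝ) 1) (hK : Convex ℝ K) {A B : Set K} {n : ℕ}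
    (hAB : CoordSeparated ((n + 1 : ℝ)⁻¹) (Subtype.val '' A) (Subtype.val '' Bᶜ)) {p q : K}
    (hp : p ∈ A ∨ p ∉ B) (hq : q ∈ A ∨ q ∉ B) :
    ∃ m ≤ n, ∀ᶠ t in 𝓝[>] ((m : ℝ) / (n + 1)),
      (p ∈ A ∨ q ∈ A → hK.clampedLineMap p q t ∈ B) ∧
      (p ∉ B ∨ q ∉ B → hK.clampedLineMap p q t ∉ A) := by
  set z := hK.clampedLineMap p q
  set S := {s ∈ Icc (0 : ℝ) 1 | z s ∈ A}
  set T := {t ∈ Icc (0 : ℝ) 1 | z t ∉ B}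
  have hsep : ∀ s ∈ S, ∀ t ∈ T, (n + 1 : ℝ)⁻¹ ≤ |s - t| := by
    rintro s ⟨hs, hsA⟩ t ⟨ht, htB⟩
    refine hAB.le_abs_sub (p := p) (q := q) (fun γ => abs_sub_le_iff.2 ?_) ?_ ?_
    · obtain ⟨hp0, hp1⟩ := hsub _ p.2 γ
      obtain ⟨hq0, hq1⟩ := hsub _ q.2 γ
      constructor <;> linarith
    · exact hK.coe_clampedLineMap p q hs ▸ mem_image_of_mem _ hsA
    · exact hK.coe_clampedLineMap p q ht ▸ mem_image_of_mem _ htB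
  have hS : (0 ∈ S ↔ p ∈ A) ∧ (1 ∈ S ↔ q ∈ A) := by
    simp [S, z, hK.clampedLineMap_zero, hK.clampedLineMap_one]
  have hT : (0 ∈ T ↔ p ∉ B) ∧ (1 ∈ T ↔ q ∉ B) := by
    simp [T, z, hK.clampedLineMap_zero, hK.clampedLineMap_one]
  obtain ⟨m, hm, h⟩ := exists_eventually_notMem hsep (sep_subset _ _)
    (by rwa [hS.1, hT.1]) (by rwa [hS.2, hT.2])
  have hm1 : (m : ℝ) / (n + 1) < 1 := by
    rw [div_lt_one (by positivity)]
    exact_mod_cast Nat.lt_succ_of_le hm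
  have hIcc : Ioo ((m : ℝ) / (n + 1)) 1 ⊆ Icc 0 1 :=
    Ioo_subset_Icc_self.trans (Icc_subset_Icc_left (by positivity))
  refine ⟨m, hm, ?_⟩
  filter_upwards [h, mem_of_superset (Ioo_mem_nhdsGT hm1) hIcc] with t ⟨htT, htS⟩ ht
  refine ⟨fun hpq => ?_, fun hpq hA => htS (by rwa [hT.1, hT.2]) ⟨ht, hA⟩⟩
  by_contra hB
  exact htT (by rwa [hS.1, hS.2]) ⟨ht, hB⟩

theorem countable_decomposition_of_convex_general {Γ : Type*} (K : Set (Γ → ℝ))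
    (hsub : ∀ x ∈ K, ∀ γ, x γ ∈ Set.Icc (0:ℝ) 1)
    (hconv : Convex ℝ K) (hcomp : IsCompact K)
    {L : Type*} [TopologicalSpace L] [CompactSpace L]
    (𝒢 : Set (Set L)) (h𝒢 : ∀ a ∈ 𝒢, IsClopen a)
    (φ : Set L → Set ↥K × Set ↥K) (hφ : IsPseudoclopenIso 𝒢 φ) :
    ∃ G : ℕ → Set (Set L), (⋃ n, G n) = 𝒢 ∧
      ∀ x y : L, ∀ n : ℕ, ∃ Gm : ℕ → Set (Set L), (⋃ m ≤ n, Gm m) = G n ∧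
        ∀ m ≤ n,
          (∀ F H : Set (Set L), F ∪ H = Gm m → Disjoint F H →
            {a ∈ Gm m | x ∈ a ∧ y ∈ a} ⊆ F → {a ∈ Gm m | x ∉ a ∧ y ∉ a} ⊆ H →
            (⋂₀ F \ ⋃₀ H).Nonempty) ∧
          IndepFamily {a ∈ Gm m | (x ∈ a ∧ y ∉ a) ∨ (y ∈ a ∧ x ∉ a)} := by
  have : CompactSpace K := isCompact_iff_compactSpace.mp hcomp
  set G : ℕ → Set (Set L) := fun n => {a ∈ 𝒢 |
    CoordSeparated ((n + 1 : ℝ)⁻¹) (Subtype.val '' (φ a).1) (Subtype.val '' (φ a).2ᶜ)}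
  refine ⟨G, subset_antisymm (iUnion_subset fun n => sep_subset _ _) fun a ha => ?_,
    fun x y n => ?_⟩
  · obtain ⟨hA, hB, hAB⟩ := hφ.2.1 a ha
    obtain ⟨n, hn⟩ := (hA.isCompact.image continuous_subtype_val).exists_coordSeparated
      (hB.isClosed_compl.isCompact.image continuous_subtype_val)
      ((disjoint_image_iff Subtype.val_injective).2 (disjoint_compl_right.mono_left hAB))
    exact mem_iUnion.2 ⟨n, ha, hn⟩
  obtain ⟨p, hp⟩ := hφ.exists_point_realizing x
  obtain ⟨q, hq⟩ := hφ.exists_point_realizing y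
  set z := hconv.clampedLineMap p q
  set P : ℕ → Set L → Prop := fun m a => ∀ᶠ t in 𝓝[>] ((m : ℝ) / (n + 1)),
    (x ∈ a ∨ y ∈ a → z t ∈ (φ a).2) ∧ (x ∉ a ∨ y ∉ a → z t ∉ (φ a).1)
  refine ⟨fun m => {a ∈ G n | P m a},
    subset_antisymm (iUnion₂_subset fun m _ => sep_subset _ _) fun a ha => ?_, fun m _ => ?_⟩
  · obtain ⟨hpA, hpB⟩ := hp a ha.1
    obtain ⟨hqA, hqB⟩ := hq a ha.1
    obtain ⟨m, hm, h⟩ := exists_eventually_clampedLineMap_mem hsub hconv ha.2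
      ((em (x ∈ a)).imp hpA hpB) ((em (y ∈ a)).imp hqA hqB)
    exact mem_iUnion₂.2 ⟨m, hm, ha, h.mono fun t ht =>
      ⟨fun hxy => ht.1 (hxy.imp hpA hqA), fun hxy => ht.2 (hxy.imp hpB hqB)⟩⟩
  have h : PairIndepFamily x y {a ∈ G n | P m a} :=
    hφ.pairIndepFamily (fun a ha => ha.1.1) z fun a ha => ha.2
  exact ⟨fun F H => h.nonempty_sInter_diff_sUnion (fun a ha => h𝒢 a ha.1.1), h.indepFamily⟩

/-- decomposition theorem for families of clopens isomorphic to
pseudoclopens of a convex compact subset of `[0,1]^Γ`. -/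
theorem countable_decomposition_of_convex {Γ : Type*} (K : Set (Γ → ℝ))
    (hsub : ∀ x ∈ K, ∀ γ, x γ ∈ Set.Icc (0:ℝ) 1)
    (hconv : Convex ℝ K) (hcomp : IsCompact K)
    {L : Type*} [TopologicalSpace L] [CompactSpace L] [T2Space L]
    [TotallyDisconnectedSpace L]
    (𝒢 : Set (Set L)) (h𝒢 : ∀ a ∈ 𝒢, IsClopen a)
    (φ : Set L → Set ↥K × Set ↥K) (hφ : IsPseudoclopenIso 𝒢 φ) :
    ∃ G : ℕ → Set (Set L), (⋃ n, G n) = 𝒢 ∧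
      ∀ x y : L, ∀ n : ℕ, ∃ Gm : ℕ → Set (Set L), (⋃ m ≤ n, Gm m) = G n ∧
        ∀ m ≤ n,
          (∀ F H : Set (Set L), F ∪ H = Gm m → Disjoint F H →
            {a ∈ Gm m | x ∈ a ∧ y ∈ a} ⊆ F → {a ∈ Gm m | x ∉ a ∧ y ∉ a} ⊆ H →
            (⋂₀ F \ ⋃₀ H).Nonempty) ∧
          IndepFamily {a ∈ Gm m | (x ∈ a ∧ y ∉ a) ∨ (y ∈ a ∧ x ∉ a)} :=
  countable_decomposition_of_convex_general K hsub hconv hcomp 𝒢 h𝒢 φ hφ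
end

section
/- Let T be a tree admitting a decomposition T = ⋃_{n<ω} Tₙ into countably many subsets such that, for every n, Tₙ contains no infinite chain. Then T is special, i.e., T is the union of countably many antichains. -/
open Set

/-! Inside a set `S` all of whose initial segments `S ∩ Iio t` are finite, the number of
predecessors in `S` strictly increases along `<`, so its level sets are antichains. In a tree the
initial segments are chains, so a set without infinite chains has finite initial segments; the
levels of all the `Tₙ` together are countably many antichains covering `T`. -/

section Levels

variable {α : Type*} [PartialOrder α] {S : Set α}

theorem ncard_inter_Iio_lt_of_lt {a b : α} (ha : a ∈ S) (hab : a < b)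
    (hfin : (S ∩ Iio b).Finite) : (S ∩ Iio a).ncard < (S ∩ Iio b).ncard :=
  ncard_lt_ncard ⟨inter_subset_inter_right S (Iio_subset_Iio hab.le),
    fun h => lt_irrefl a (h ⟨ha, hab⟩).2⟩ hfin

theorem isAntichain_setOf_ncard_inter_Iio_eq (hfin : ∀ t ∈ S, (S ∩ Iio t).Finite) (k : ℕ) :
    IsAntichain (· ≤ ·) {t ∈ S | (S ∩ Iio t).ncard = k} := by
  rintro a ⟨ha, rfl⟩ b ⟨hb, hbk⟩ hne hle
  exact (ncard_inter_Iio_lt_of_lt ha (hle.lt_of_ne hne) (hfin b hb)).ne' hbk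

theorem exists_iUnion_eq_isAntichain_of_finite_inter_Iio (hfin : ∀ t ∈ S, (S ∩ Iio t).Finite) :
    ∃ A : ℕ → Set α, ⋃ k, A k = S ∧ ∀ k, IsAntichain (· ≤ ·) (A k) :=
  ⟨fun k => {t ∈ S | (S ∩ Iio t).ncard = k},
    Subset.antisymm (iUnion_subset fun _ _ ht => ht.1) fun _ ht => mem_iUnion.2 ⟨_, ht, rfl⟩,
    isAntichain_setOf_ncard_inter_Iio_eq hfin⟩

theorem Set.Finite.inter_Iio_of_isChain_Iio {t : α} (hchain : IsChain (· ≤ ·) (Iio t))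
    (hS : ∀ c ⊆ S, IsChain (· ≤ ·) c → c.Finite) : (S ∩ Iio t).Finite :=
  hS _ inter_subset_left (hchain.mono inter_subset_right)

end Levels

theorem special_of_countable_union_no_infinite_chain_general {T : Type*}
    [PartialOrder T]
    (htree : ∀ t : T, IsChain (· ≤ ·) {s | s < t} ∧ Set.IsWF {s | s < t})
    (Tn : ℕ → Set T) (hcover : (⋃ n, Tn n) = Set.univ)
    (hnochain : ∀ n, ∀ c ⊆ Tn n, IsChain (· ≤ ·) c → c.Finite) :
    ∃ A : ℕ → Set T, (⋃ n, A n) = Set.univ ∧ ∀ n, IsAntichain (· ≤ ·) (A n) := by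
  have hlevels (n : ℕ) : ∃ A : ℕ → Set T, ⋃ k, A k = Tn n ∧ ∀ k, IsAntichain (· ≤ ·) (A k) :=
    exists_iUnion_eq_isAntichain_of_finite_inter_Iio fun t _ =>
      Set.Finite.inter_Iio_of_isChain_Iio (htree t).1 (hnochain n)
  choose A hA hanti using hlevels
  refine ⟨fun m => A m.unpair.1 m.unpair.2, ?_, fun m => hanti _ _⟩
  rw [iUnion_unpair A, ← hcover]
  simp only [hA]

/-- If a tree `T` (a partial order with a least element whose
initial segments `{s | s < t}` are well ordered) is a countable union of sets
containing no infinite chain, then `T` is special, i.e. a countable union of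
antichains. -/
theorem special_of_countable_union_no_infinite_chain {T : Type*}
    [PartialOrder T] [OrderBot T]
    (htree : ∀ t : T, IsChain (· ≤ ·) {s | s < t} ∧ Set.IsWF {s | s < t})
    (Tn : ℕ → Set T) (hcover : (⋃ n, Tn n) = Set.univ)
    (hnochain : ∀ n, ∀ c ⊆ Tn n, IsChain (· ≤ ·) c → c.Finite) :
    ∃ A : ℕ → Set T, (⋃ n, A n) = Set.univ ∧ ∀ n, IsAntichain (· ≤ ·) (A n) :=
  special_of_countable_union_no_infinite_chain_general htree Tn hcover hnochain
end
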